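/- arXiv:2307.11340 — 6 statements merged into one kernel-verified Lean document; each statement's English description precedes it below -/
import Mathlib

section
/- Let T > 0 and let f : [0, T] → ℝ be a càdlàg function (right-continuous with left limits) all of whose jumps are non-positive, i.e. f(t) ≤ lim_{s↑t} f(s) for every t ∈ (0, T]. Then the running maximum M(t) := sup_{s ∈ [0, t]} f(s) is a continuous and nondecreasing function on [0, T]. -/
open Filter

/-- Let `T > 0` and `f : [0, T] → ℝ` be a càdlàg function (right-continuous on
`[0, T)` with left limits on `(0, T]`) all of whose jumps are non-positive, i.e.
`f t ≤ lim_{s↑t} f s` for every `t ∈ (0, T]`. Then the running maximum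
`M t = sup_{s ∈ [0, t]} f s` is continuous and nondecreasing on `[0, T]`. -/
theorem stmt5 (T : ℝ) (hT : 0 < T) (f : ℝ → ℝ)
    (hrc : ∀ t ∈ Set.Ico (0 : ℝ) T, Tendsto f (nhdsWithin t (Set.Ioc t T)) (nhds (f t)))
    (hll : ∀ t ∈ Set.Ioc (0 : ℝ) T, ∃ l : ℝ,
      Tendsto f (nhdsWithin t (Set.Ico 0 t)) (nhds l) ∧ f t ≤ l)
    (M : ℝ → ℝ)
    (hM : ∀ t ∈ Set.Icc (0 : ℝ) T, M t = sSup (f '' Set.Icc 0 t)) :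
    MonotoneOn M (Set.Icc 0 T) ∧ ContinuousOn M (Set.Icc 0 T) := by
  -- Step 1: local boundedness + compactness ⇒ f bounded above on [0,T]
  have key : ∀ x ∈ Set.Icc (0:ℝ) T, ∃ U : Set ℝ, IsOpen U ∧ x ∈ U ∧
      BddAbove (f '' (U ∩ Set.Icc 0 T)) := by
    intro x hx
    obtain ⟨Ur, hUro, hxUr, hfr⟩ : ∃ U : Set ℝ, IsOpen U ∧ x ∈ U ∧
        ∀ y ∈ U ∩ Set.Ioc x T, f y ≤ f x + 1 := by
      rcases eq_or_lt_of_le hx.2 with h | h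
      · refine ⟨Set.univ, isOpen_univ, Set.mem_univ x, ?_⟩
        intro y hy
        rw [h, Set.Ioc_self] at hy
        exact hy.2.elim
      · have h1 : ∀ᶠ y in nhdsWithin x (Set.Ioc x T), f y ≤ f x + 1 :=
          (hrc x ⟨hx.1, h⟩).eventually (eventually_le_nhds (by linarith))
        obtain ⟨U, hUo, hxU, hsub⟩ := mem_nhdsWithin.mp h1
        exact ⟨U, hUo, hxU, fun y hy => hsub hy⟩
    obtain ⟨l, Ul, hUlo, hxUl, hfl⟩ : ∃ (l : ℝ) (U : Set ℝ), IsOpen U ∧ x ∈ U ∧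
        ∀ y ∈ U ∩ Set.Ico 0 x, f y ≤ l + 1 := by
      rcases eq_or_lt_of_le hx.1 with h | h
      · refine ⟨0, Set.univ, isOpen_univ, Set.mem_univ x, ?_⟩
        intro y hy
        rw [← h, Set.Ico_self] at hy
        exact hy.2.elim
      · obtain ⟨l, hl, _⟩ := hll x ⟨h, hx.2⟩
        have h1 : ∀ᶠ y in nhdsWithin x (Set.Ico 0 x), f y ≤ l + 1 :=
          hl.eventually (eventually_le_nhds (by linarith))
        obtain ⟨U, hUo, hxU, hsub⟩ := mem_nhdsWithin.mp h1
        exact ⟨l, U, hUo, hxU, fun y hy => hsub hy⟩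
    refine ⟨Ur ∩ Ul, hUro.inter hUlo, ⟨hxUr, hxUl⟩,
      max (f x) (max (f x + 1) (l + 1)), ?_⟩
    rintro y ⟨z, ⟨⟨hzr, hzl⟩, hz0, hzT⟩, rfl⟩
    rcases lt_trichotomy z x with hzx | hzx | hzx
    · exact le_max_of_le_right (le_max_of_le_right (hfl z ⟨hzl, hz0, hzx⟩))
    · rw [hzx]; exact le_max_left _ _
    · exact le_max_of_le_right (le_max_of_le_left (hfr z ⟨hzr, hzx, hzT⟩))
  choose! U hUo hxU hUb using key
  obtain ⟨s, hs, hcov⟩ := isCompact_Icc.elim_nhds_subcover U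
    (fun x hx => (hUo x hx).mem_nhds (hxU x hx))
  have hB : BddAbove (f '' Set.Icc (0:ℝ) T) := by
    have hsub : f '' Set.Icc (0:ℝ) T ⊆ ⋃ x ∈ s, f '' (U x ∩ Set.Icc 0 T) := by
      rintro y ⟨z, hz, rfl⟩
      obtain ⟨x, hx, hzU⟩ := Set.mem_iUnion₂.mp (hcov hz)
      exact Set.mem_iUnion₂.mpr ⟨x, hx, ⟨z, ⟨hzU, hz⟩, rfl⟩⟩
    exact BddAbove.mono hsub
      ((Set.Finite.bddAbove_biUnion s.finite_toSet).mpr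
        (fun x hx => hUb x (hs x hx)))
  have hbdd : ∀ t, t ≤ T → BddAbove (f '' Set.Icc 0 t) := fun t htt =>
    hB.mono (Set.image_mono (Set.Icc_subset_Icc_right htt))
  have hne : ∀ t, 0 ≤ t → (f '' Set.Icc 0 t).Nonempty :=
    fun t htt => ⟨f 0, ⟨0, ⟨le_refl 0, htt⟩, rfl⟩⟩
  have hmono : MonotoneOn M (Set.Icc 0 T) := by
    intro a ha b hb hab
    rw [hM a ha, hM b hb]
    exact csSup_le_csSup (hbdd b hb.2) (hne a ha.1)
      (Set.image_mono (Set.Icc_subset_Icc_right hab))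
  have hfle : ∀ u t, 0 ≤ u → u ≤ t → t ≤ T → f u ≤ M t := by
    intro u t hu hut htT
    rw [hM t ⟨le_trans hu hut, htT⟩]
    exact le_csSup (hbdd t htT) ⟨u, ⟨hu, hut⟩, rfl⟩
  refine ⟨hmono, ?_⟩
  intro t ht
  -- right continuity
  have h2 : Tendsto M (nhdsWithin t (Set.Ioc t T)) (nhds (M t)) := by
    rcases eq_or_lt_of_le ht.2 with h | h
    · rw [h, Set.Ioc_self, nhdsWithin_empty]; exact tendsto_bot
    · rw [Metric.tendsto_nhdsWithin_nhds]
      intro ε hε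
      obtain ⟨δ, hδ, hδp⟩ := Metric.tendsto_nhdsWithin_nhds.mp
        (hrc t ⟨ht.1, h⟩) (ε/2) (by linarith)
      refine ⟨δ, hδ, ?_⟩
      intro x hx hxd
      have hxT : x ∈ Set.Icc (0:ℝ) T := ⟨le_trans ht.1 hx.1.le, hx.2⟩
      have hle1 : M t ≤ M x := hmono ht hxT hx.1.le
      have hle2 : M x ≤ M t + ε/2 := by
        rw [hM x hxT]
        refine csSup_le (hne x hxT.1) ?_
        rintro y ⟨u, hu, rfl⟩
        rcases le_or_gt u t with hut | hut
        · have := hfle u t hu.1 hut ht.2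
          linarith
        · have hd : dist u t < δ := by
            rw [Real.dist_eq, abs_of_pos (by linarith)]
            rw [Real.dist_eq, abs_of_pos (by linarith [hx.1])] at hxd
            linarith [hu.2]
          have h3 := hδp ⟨hut, le_trans hu.2 hx.2⟩ hd
          rw [Real.dist_eq] at h3
          have h4 := (abs_lt.mp h3).2
          have h5 := hfle t t ht.1 le_rfl ht.2
          linarith
      rw [Real.dist_eq, abs_of_nonneg (by linarith)]
      linarith
  -- left continuity
  have h1 : Tendsto M (nhdsWithin t (Set.Icc 0 t)) (nhds (M t)) := by
    have hsplit : Set.Icc (0:ℝ) t = Set.Ico 0 t ∪ {t} :=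
      (Set.Ico_union_right ht.1).symm
    rw [hsplit, nhdsWithin_union]
    refine tendsto_sup.mpr ⟨?_, ?_⟩
    · rcases eq_or_lt_of_le ht.1 with h | h
      · rw [← h, Set.Ico_self, nhdsWithin_empty]; exact tendsto_bot
      · obtain ⟨l, hl, hfltl⟩ := hll t ⟨h, ht.2⟩
        rw [Metric.tendsto_nhdsWithin_nhds]
        intro ε hε
        obtain ⟨δ1, hδ1, hδp⟩ := Metric.tendsto_nhdsWithin_nhds.mp hl (ε/3) (by linarith)
        set s0 : ℝ := max 0 (t - δ1/2) with hs0def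
        have hs00 : 0 ≤ s0 := le_max_left _ _
        have hs0ge : t - δ1/2 ≤ s0 := le_max_right _ _
        have hs0t : s0 < t := max_lt h (by linarith)
        have hs0d : dist s0 t < δ1 := by
          rw [Real.dist_eq, abs_of_nonpos (by linarith), neg_sub]
          rcases max_cases (0:ℝ) (t - δ1/2) with ⟨hm, _⟩ | ⟨hm, _⟩ <;>
            rw [hs0def, hm] <;> linarith
        have hfs0 : l - ε/3 < f s0 := by
          have h3 := hδp ⟨hs00, hs0t⟩ hs0d
          rw [Real.dist_eq] at h3
          linarith [(abs_lt.mp h3).1]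
        refine ⟨t - s0, by linarith, ?_⟩
        intro x hx hxd
        have hxT : x ∈ Set.Icc (0:ℝ) T := ⟨hx.1, le_trans hx.2.le ht.2⟩
        have hs0x : s0 ≤ x := by
          rw [Real.dist_eq, abs_of_nonpos (by linarith [hx.2])] at hxd
          linarith
        have hMx : l - ε/3 < M x :=
          lt_of_lt_of_le hfs0 (hfle s0 x hs00 hs0x hxT.2)
        have hMtx : M x ≤ M t := hmono hxT ht hx.2.le
        have hMt : M t ≤ max (M x) (l + ε/3) := by
          rw [hM t ht]
          refine csSup_le (hne t ht.1) ?_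
          rintro y ⟨u, hu, rfl⟩
          rcases le_or_gt u x with hux | hux
          · exact le_max_of_le_left (hfle u x hu.1 hux hxT.2)
          · rcases eq_or_lt_of_le hu.2 with hut | hut
            · rw [hut]; exact le_max_of_le_right (by linarith)
            · have hd : dist u t < δ1 := by
                rw [Real.dist_eq, abs_of_nonpos (by linarith), neg_sub]
                linarith
              have h3 := hδp ⟨hu.1, hut⟩ hd
              rw [Real.dist_eq] at h3
              exact le_max_of_le_right (by linarith [(abs_lt.mp h3).2])
        have hfin : M t ≤ M x + 2*ε/3 := by
          rcases max_cases (M x) (l + ε/3) with ⟨hmax, _⟩ | ⟨hmax, _⟩ <;>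
            rw [hmax] at hMt <;> linarith
        rw [Real.dist_eq, abs_of_nonpos (by linarith)]
        linarith
    · rw [nhdsWithin_singleton]
      exact tendsto_pure_nhds M t
  have hsub2 : Set.Icc (0:ℝ) T ⊆ Set.Icc 0 t ∪ Set.Ioc t T := by
    intro y hy
    rcases le_or_gt y t with h | h
    · exact Or.inl ⟨hy.1, h⟩
    · exact Or.inr ⟨h, hy.2⟩
  have hle : nhdsWithin t (Set.Icc 0 T) ≤
      nhdsWithin t (Set.Icc 0 t) ⊔ nhdsWithin t (Set.Ioc t T) := by
    rw [← nhdsWithin_union]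
    exact nhdsWithin_mono t hsub2
  exact Filter.Tendsto.mono_left (tendsto_sup.mpr ⟨h1, h2⟩) hle
end

section
/- Let (Ω, F, P) be a probability space with Ω a standard Borel space, let T > 0, and let H = (H_t)_{t ∈ [0,T]} and F = (F_t)_{t ∈ [0,T]} be filtrations of sub-σ-algebras of F with H_t ⊆ F_t for all t ∈ [0, T]. Then the following three statements are equivalent: (1) H is immersed in F, i.e. every square-integrable H-martingale is a square-integrable F-martingale; (2) for every t ∈ [0, T], the σ-algebras H_T and F_t are conditionally independent given H_t under P; (3) for every t ∈ [0, T] and every integrable F_t-measurable random variable ζ, E[ζ | H_T] = E[ζ | H_t] P-almost surely. -/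
set_option maxHeartbeats 1000000
set_option linter.unusedSectionVars false
set_option linter.unusedVariables false

open MeasureTheory ProbabilityTheory

section Stmt6Aux

variable {Ω : Type*} {m0 : MeasurableSpace Ω} {μ : Measure Ω} [IsProbabilityMeasure μ]

private lemma stmt6_ind_int {A : Set Ω} (hA : MeasurableSet[m0] A) :
    Integrable (A.indicator (fun _ => (1 : ℝ))) μ :=
  (integrable_const 1).indicator hA

private lemma stmt6_ind_bound (A : Set Ω) (x : Ω) :
    ‖A.indicator (fun _ => (1 : ℝ)) x‖ ≤ 1 := by
  classical
  rw [Set.indicator_apply]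
  split <;> simp

private lemma stmt6_ind_sm {m : MeasurableSpace Ω} {A : Set Ω} (hA : MeasurableSet[m] A) :
    StronglyMeasurable[m] (A.indicator (fun _ => (1 : ℝ))) :=
  stronglyMeasurable_const.indicator hA

private lemma stmt6_condexp_ind_bound (m : MeasurableSpace Ω) (hm : m ≤ m0) {A : Set Ω}
    (hA : MeasurableSet[m0] A) :
    ∀ᵐ ω ∂μ, ‖(μ[A.indicator (fun _ => (1 : ℝ))|m]) ω‖ ≤ 1 := by
  have h0 : (0 : Ω → ℝ) ≤ᵐ[μ] μ[A.indicator (fun _ => (1 : ℝ))|m] :=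
    condExp_nonneg (Filter.Eventually.of_forall fun ω =>
      Set.indicator_nonneg (fun _ _ => zero_le_one) ω)
  have h1 : μ[A.indicator (fun _ => (1 : ℝ))|m] ≤ᵐ[μ] μ[(fun _ => (1 : ℝ))|m] :=
    condExp_mono (stmt6_ind_int hA) (integrable_const 1)
      (Filter.Eventually.of_forall fun ω => by
        classical
        rw [Set.indicator_apply]
        split <;> norm_num)
  rw [condExp_const hm] at h1
  filter_upwards [h0, h1] with ω hω0 hω1
  have hω0' : (0 : ℝ) ≤ (μ[A.indicator (fun _ => (1 : ℝ))|m]) ω := hω0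
  rw [Real.norm_eq_abs, abs_le]
  exact ⟨by linarith, hω1⟩

private lemma stmt6_int_ind {f : Ω → ℝ} (hf : Integrable f μ) {B : Set Ω}
    (hB : MeasurableSet[m0] B) : Integrable (B.indicator f) μ :=
  hf.indicator hB

private lemma stmt6_integral_ind {f : Ω → ℝ} {B : Set Ω} (hB : MeasurableSet[m0] B) :
    ∫ x, B.indicator f x ∂μ = ∫ x in B, f x ∂μ :=
  integral_indicator hB

private lemma stmt6_intOn {f : Ω → ℝ} (hf : Integrable f μ) (s : Set Ω) :
    IntegrableOn f s μ :=
  hf.integrableOn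

private lemma stmt6_mul_ind (A : Set Ω) (f : Ω → ℝ) :
    (f * A.indicator (fun _ => (1 : ℝ))) = A.indicator f := by
  classical
  funext x
  simp only [Pi.mul_apply, Set.indicator_apply]
  by_cases h : x ∈ A <;> simp [h]

/-- Key set-integral identity. -/
private lemma stmt6_key {m' m2 : MeasurableSpace Ω} (hm'2 : m' ≤ m2) (hm2 : m2 ≤ m0)
    {ζ : Ω → ℝ} (hζm : StronglyMeasurable[m2] ζ) (hζi : Integrable ζ μ)
    {B : Set Ω} (hB : MeasurableSet[m0] B)
    (h : μ[B.indicator (fun _ => (1 : ℝ))|m2] =ᵐ[μ] μ[B.indicator (fun _ => (1 : ℝ))|m']) :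
    ∫ x in B, ζ x ∂μ = ∫ x in B, (μ[ζ|m']) x ∂μ := by
  have hm' : m' ≤ m0 := hm'2.trans hm2
  set e : Ω → ℝ := B.indicator (fun _ => (1 : ℝ)) with he
  have hei : Integrable e μ := stmt6_ind_int hB
  have hζe : Integrable (ζ * e) μ := by
    rw [he, stmt6_mul_ind]; exact stmt6_int_ind hζi hB
  have hce : Integrable (μ[ζ|m'] * e) μ := by
    rw [he, stmt6_mul_ind]; exact stmt6_int_ind integrable_condExp hB
  calc ∫ x in B, ζ x ∂μ = ∫ x, (ζ * e) x ∂μ := by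
        rw [he, stmt6_mul_ind]; exact (stmt6_integral_ind hB).symm
    _ = ∫ x, (μ[ζ * e|m2]) x ∂μ := (integral_condExp hm2).symm
    _ = ∫ x, (ζ * μ[e|m2]) x ∂μ :=
        integral_congr_ae (condExp_mul_of_stronglyMeasurable_left hζm hζe hei)
    _ = ∫ x, (μ[e|m'] * ζ) x ∂μ := by
        refine integral_congr_ae ?_
        filter_upwards [h] with x hx
        simp only [Pi.mul_apply, hx, mul_comm]
    _ = ∫ x, (μ[μ[e|m'] * ζ|m']) x ∂μ := (integral_condExp hm').symm
    _ = ∫ x, (μ[e|m'] * μ[ζ|m']) x ∂μ :=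
        integral_congr_ae (condExp_stronglyMeasurable_mul_of_bound hm'
          stronglyMeasurable_condExp hζi 1 (stmt6_condexp_ind_bound m' hm' hB))
    _ = ∫ x, (μ[ζ|m'] * μ[e|m']) x ∂μ := by
        refine integral_congr_ae ?_
        exact Filter.Eventually.of_forall fun x => by simp [mul_comm]
    _ = ∫ x, (μ[μ[ζ|m'] * e|m']) x ∂μ :=
        (integral_congr_ae (condExp_mul_of_stronglyMeasurable_left
          stronglyMeasurable_condExp hce hei)).symm
    _ = ∫ x, (μ[ζ|m'] * e) x ∂μ := integral_condExp hm'
    _ = ∫ x in B, (μ[ζ|m']) x ∂μ := by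
        rw [he, stmt6_mul_ind]; exact stmt6_integral_ind hB

/-- Product formula for conditional expectations of indicators. -/
private lemma stmt6_condexp_inter_eq {mi ma : MeasurableSpace Ω} (hmima : mi ≤ ma)
    (hma : ma ≤ m0) {A B : Set Ω} (hA : MeasurableSet[m0] A) (hB : MeasurableSet[ma] B)
    (h : μ[A.indicator (fun _ => (1 : ℝ))|ma] =ᵐ[μ] μ[A.indicator (fun _ => (1 : ℝ))|mi]) :
    μ[(A ∩ B).indicator (fun _ => (1 : ℝ))|mi] =ᵐ[μ]
      μ[A.indicator (fun _ => (1 : ℝ))|mi] * μ[B.indicator (fun _ => (1 : ℝ))|mi] := by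
  classical
  have hmi : mi ≤ m0 := hmima.trans hma
  have hind : (A ∩ B).indicator (fun _ => (1 : ℝ))
      = B.indicator (fun _ => (1 : ℝ)) * A.indicator (fun _ => (1 : ℝ)) := by
    funext x
    simp only [Pi.mul_apply, Set.indicator_apply, Set.mem_inter_iff]
    by_cases hxA : x ∈ A <;> by_cases hxB : x ∈ B <;> simp [hxA, hxB]
  have step1 : μ[B.indicator (fun _ => (1 : ℝ)) * A.indicator (fun _ => (1 : ℝ))|ma]
      =ᵐ[μ] B.indicator (fun _ => (1 : ℝ)) * μ[A.indicator (fun _ => (1 : ℝ))|mi] := by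
    refine (condExp_stronglyMeasurable_mul_of_bound hma (stmt6_ind_sm hB)
      (stmt6_ind_int hA) 1 (Filter.Eventually.of_forall (stmt6_ind_bound B))).trans ?_
    filter_upwards [h] with x hx
    simp only [Pi.mul_apply, hx]
  calc μ[(A ∩ B).indicator (fun _ => (1 : ℝ))|mi]
      = μ[B.indicator (fun _ => (1 : ℝ)) * A.indicator (fun _ => (1 : ℝ))|mi] := by rw [hind]
    _ =ᵐ[μ] μ[μ[B.indicator (fun _ => (1 : ℝ)) * A.indicator (fun _ => (1 : ℝ))|ma]|mi] :=
        (condExp_condExp_of_le hmima hma).symm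
    _ =ᵐ[μ] μ[μ[A.indicator (fun _ => (1 : ℝ))|mi] * B.indicator (fun _ => (1 : ℝ))|mi] := by
        refine condExp_congr_ae (step1.trans ?_)
        exact Filter.Eventually.of_forall fun x => by simp [mul_comm]
    _ =ᵐ[μ] μ[A.indicator (fun _ => (1 : ℝ))|mi] * μ[B.indicator (fun _ => (1 : ℝ))|mi] :=
        condExp_stronglyMeasurable_mul_of_bound hmi stronglyMeasurable_condExp
          (stmt6_ind_int (hma B hB)) 1 (stmt6_condexp_ind_bound mi hmi hA)

/-- From conditional independence, conditional expectations of indicators of `m1`-sets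
with respect to `m2` and `m'` agree. -/
private lemma stmt6_two_of_condIndep [StandardBorelSpace Ω] [Nonempty Ω]
    {m' m1 m2 : MeasurableSpace Ω} (hm'2 : m' ≤ m2) (hm2 : m2 ≤ m0) (hm1 : m1 ≤ m0)
    (hm' : m' ≤ m0) (hci : CondIndep m' m1 m2 hm' μ) {A : Set Ω} (hA : MeasurableSet[m1] A) :
    μ[A.indicator (fun _ => (1 : ℝ))|m2] =ᵐ[μ] μ[A.indicator (fun _ => (1 : ℝ))|m'] := by
  classical
  rw [condIndep_iff m' m1 m2 hm' hm1 hm2 μ] at hci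
  refine (ae_eq_condExp_of_forall_setIntegral_eq hm2 (stmt6_ind_int (hm1 A hA))
    (fun s _ _ => stmt6_intOn integrable_condExp s) (fun B hB _ => ?_)
    (stronglyMeasurable_condExp.mono hm'2).aestronglyMeasurable).symm
  have hBm : MeasurableSet[m0] B := hm2 B hB
  have hLHS : ∫ x in B, (μ[A.indicator (fun _ => (1 : ℝ))|m']) x ∂μ
      = ∫ x, (μ[A.indicator (fun _ => (1 : ℝ))|m']
          * μ[B.indicator (fun _ => (1 : ℝ))|m']) x ∂μ := by
    calc ∫ x in B, (μ[A.indicator (fun _ => (1 : ℝ))|m']) x ∂μ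
        = ∫ x, (μ[A.indicator (fun _ => (1 : ℝ))|m']
            * B.indicator (fun _ => (1 : ℝ))) x ∂μ := by
          rw [stmt6_mul_ind]; exact (stmt6_integral_ind hBm).symm
      _ = ∫ x, (μ[μ[A.indicator (fun _ => (1 : ℝ))|m']
            * B.indicator (fun _ => (1 : ℝ))|m']) x ∂μ := (integral_condExp hm').symm
      _ = ∫ x, (μ[A.indicator (fun _ => (1 : ℝ))|m']
            * μ[B.indicator (fun _ => (1 : ℝ))|m']) x ∂μ :=
          integral_congr_ae (condExp_stronglyMeasurable_mul_of_bound hm'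
            stronglyMeasurable_condExp (stmt6_ind_int hBm) 1
            (stmt6_condexp_ind_bound m' hm' (hm1 A hA)))
  have hRHS : ∫ x in B, A.indicator (fun _ => (1 : ℝ)) x ∂μ
      = ∫ x, (μ[A.indicator (fun _ => (1 : ℝ))|m']
          * μ[B.indicator (fun _ => (1 : ℝ))|m']) x ∂μ := by
    calc ∫ x in B, A.indicator (fun _ => (1 : ℝ)) x ∂μ
        = ∫ x, (A ∩ B).indicator (fun _ => (1 : ℝ)) x ∂μ := by
          rw [← stmt6_integral_ind hBm]
          congr 1
          funext x
          simp only [Set.indicator_apply, Set.mem_inter_iff]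
          by_cases hxA : x ∈ A <;> by_cases hxB : x ∈ B <;> simp [hxA, hxB]
      _ = ∫ x, (μ[(A ∩ B).indicator (fun _ => (1 : ℝ))|m']) x ∂μ := (integral_condExp hm').symm
      _ = ∫ x, (μ[A.indicator (fun _ => (1 : ℝ))|m']
            * μ[B.indicator (fun _ => (1 : ℝ))|m']) x ∂μ :=
          integral_congr_ae (hci A B hA hB)
  rw [hLHS, hRHS]

end Stmt6Aux

/-- Let `(Ω, F, P)` be a probability space with `Ω` standard Borel, `T > 0`,
and `H ⊆ F` filtrations indexed by `[0, T]`. The following are equivalent: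
(1) `H` is immersed in `F`: every square-integrable `H`-martingale is a square-integrable
`F`-martingale;
(2) for every `t ∈ [0, T]`, the σ-algebras `H T` and `F t` are conditionally independent
given `H t` under `P`;
(3) for every `t ∈ [0, T]` and every integrable `F t`-measurable `ζ`,
`E[ζ | H T] = E[ζ | H t]` `P`-a.s. -/
theorem stmt6 {Ω : Type*} [m0 : MeasurableSpace Ω] [StandardBorelSpace Ω] [Nonempty Ω]
    (P : Measure Ω) [IsProbabilityMeasure P]
    (T : ℝ) (hT : 0 < T)
    (H F : ℝ → MeasurableSpace Ω)
    (hHF : ∀ t ∈ Set.Icc (0 : ℝ) T, H t ≤ F t)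
    (hFle : ∀ t ∈ Set.Icc (0 : ℝ) T, F t ≤ m0)
    (hHle : ∀ t ∈ Set.Icc (0 : ℝ) T, H t ≤ m0)
    (hHmono : ∀ s ∈ Set.Icc (0 : ℝ) T, ∀ t ∈ Set.Icc (0 : ℝ) T, s ≤ t → H s ≤ H t)
    (hFmono : ∀ s ∈ Set.Icc (0 : ℝ) T, ∀ t ∈ Set.Icc (0 : ℝ) T, s ≤ t → F s ≤ F t) :
    ((∀ Y : ℝ → Ω → ℝ,
        (∀ t ∈ Set.Icc (0 : ℝ) T, StronglyMeasurable[H t] (Y t)) →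
        (∀ t ∈ Set.Icc (0 : ℝ) T, MemLp (Y t) 2 P) →
        (∀ s ∈ Set.Icc (0 : ℝ) T, ∀ t ∈ Set.Icc (0 : ℝ) T, s ≤ t → P[Y t | H s] =ᵐ[P] Y s) →
        ((∀ t ∈ Set.Icc (0 : ℝ) T, StronglyMeasurable[F t] (Y t)) ∧
          (∀ t ∈ Set.Icc (0 : ℝ) T, MemLp (Y t) 2 P) ∧
          (∀ s ∈ Set.Icc (0 : ℝ) T, ∀ t ∈ Set.Icc (0 : ℝ) T, s ≤ t → P[Y t | F s] =ᵐ[P] Y s)))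
      ↔ (∀ t, ∀ ht : t ∈ Set.Icc (0 : ℝ) T, CondIndep (H t) (H T) (F t) (hHle t ht) P))
    ∧
    ((∀ t, ∀ ht : t ∈ Set.Icc (0 : ℝ) T, CondIndep (H t) (H T) (F t) (hHle t ht) P)
      ↔ (∀ t ∈ Set.Icc (0 : ℝ) T, ∀ ζ : Ω → ℝ, Integrable ζ P →
          StronglyMeasurable[F t] ζ → P[ζ | H T] =ᵐ[P] P[ζ | H t])) := by
  have hTmem : T ∈ Set.Icc (0 : ℝ) T := ⟨hT.le, le_rfl⟩
  have hHT : H T ≤ m0 := hHle T hTmem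
  -- (1) → (2)
  have h12 : (∀ Y : ℝ → Ω → ℝ,
        (∀ t ∈ Set.Icc (0 : ℝ) T, StronglyMeasurable[H t] (Y t)) →
        (∀ t ∈ Set.Icc (0 : ℝ) T, MemLp (Y t) 2 P) →
        (∀ s ∈ Set.Icc (0 : ℝ) T, ∀ t ∈ Set.Icc (0 : ℝ) T, s ≤ t → P[Y t | H s] =ᵐ[P] Y s) →
        ((∀ t ∈ Set.Icc (0 : ℝ) T, StronglyMeasurable[F t] (Y t)) ∧
          (∀ t ∈ Set.Icc (0 : ℝ) T, MemLp (Y t) 2 P) ∧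
          (∀ s ∈ Set.Icc (0 : ℝ) T, ∀ t ∈ Set.Icc (0 : ℝ) T, s ≤ t → P[Y t | F s] =ᵐ[P] Y s)))
      → (∀ t, ∀ ht : t ∈ Set.Icc (0 : ℝ) T, CondIndep (H t) (H T) (F t) (hHle t ht) P) := by
    intro h1 t ht
    have h2' : ∀ A : Set Ω, MeasurableSet[H T] A →
        P[A.indicator (fun _ => (1 : ℝ))|F t] =ᵐ[P] P[A.indicator (fun _ => (1 : ℝ))|H t] := by
      intro A hA
      have hAm : MeasurableSet[m0] A := hHT A hA
      have hY := h1 (fun s => P[A.indicator (fun _ => (1 : ℝ))|H s])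
        (fun s _ => stronglyMeasurable_condExp)
        (fun s hs => MemLp.of_bound
          ((stronglyMeasurable_condExp.mono (hHle s hs)).aestronglyMeasurable) 1
          (stmt6_condexp_ind_bound (H s) (hHle s hs) hAm))
        (fun s hs u hu hsu => condExp_condExp_of_le (hHmono s hs u hu hsu) (hHle u hu))
      have hmart : P[P[A.indicator (fun _ => (1 : ℝ))|H T]|F t]
          =ᵐ[P] P[A.indicator (fun _ => (1 : ℝ))|H t] := hY.2.2 t ht T hTmem ht.2
      have hξT : P[A.indicator (fun _ => (1 : ℝ))|H T] = A.indicator (fun _ => (1 : ℝ)) :=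
        condExp_of_stronglyMeasurable hHT (stmt6_ind_sm hA) (stmt6_ind_int hAm)
      rw [hξT] at hmart
      exact hmart
    rw [condIndep_iff (H t) (H T) (F t) (hHle t ht) hHT (hFle t ht) P]
    intro A B hA hB
    exact stmt6_condexp_inter_eq (hHF t ht) (hFle t ht) (hHT A hA) hB (h2' A hA)
  -- (2) → (3)
  have h23 : (∀ t, ∀ ht : t ∈ Set.Icc (0 : ℝ) T, CondIndep (H t) (H T) (F t) (hHle t ht) P)
      → (∀ t ∈ Set.Icc (0 : ℝ) T, ∀ ζ : Ω → ℝ, Integrable ζ P →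
          StronglyMeasurable[F t] ζ → P[ζ | H T] =ᵐ[P] P[ζ | H t]) := by
    intro h2 t ht ζ hζi hζm
    have hmtT : H t ≤ H T := hHmono t ht T hTmem ht.2
    have h2'' : ∀ A : Set Ω, MeasurableSet[H T] A →
        P[A.indicator (fun _ => (1 : ℝ))|F t] =ᵐ[P] P[A.indicator (fun _ => (1 : ℝ))|H t] :=
      fun A hA => stmt6_two_of_condIndep (hHF t ht) (hFle t ht) hHT (hHle t ht) (h2 t ht) hA
    refine (ae_eq_condExp_of_forall_setIntegral_eq hHT hζi
      (fun s _ _ => integrable_condExp.integrableOn) (fun A hA _ => ?_)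
      (stronglyMeasurable_condExp.mono hmtT).aestronglyMeasurable).symm
    exact (stmt6_key (hHF t ht) (hFle t ht) hζm hζi (hHT A hA) (h2'' A hA)).symm
  -- (3) → (2)
  have h32 : (∀ t ∈ Set.Icc (0 : ℝ) T, ∀ ζ : Ω → ℝ, Integrable ζ P →
          StronglyMeasurable[F t] ζ → P[ζ | H T] =ᵐ[P] P[ζ | H t])
      → (∀ t, ∀ ht : t ∈ Set.Icc (0 : ℝ) T, CondIndep (H t) (H T) (F t) (hHle t ht) P) := by
    intro h3 t ht
    rw [condIndep_iff (H t) (H T) (F t) (hHle t ht) hHT (hFle t ht) P]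
    intro A B hA hB
    have hBm : MeasurableSet[m0] B := hFle t ht B hB
    have h := h3 t ht (B.indicator (fun _ => (1 : ℝ))) (stmt6_ind_int hBm) (stmt6_ind_sm hB)
    have hkey := stmt6_condexp_inter_eq (hHmono t ht T hTmem ht.2) hHT hBm hA h
    have hset : A ∩ B = B ∩ A := Set.inter_comm A B
    calc P[(A ∩ B).indicator (fun _ => (1 : ℝ))|H t]
        = P[(B ∩ A).indicator (fun _ => (1 : ℝ))|H t] := by rw [hset]
      _ =ᵐ[P] P[B.indicator (fun _ => (1 : ℝ))|H t] * P[A.indicator (fun _ => (1 : ℝ))|H t] :=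
          hkey
      _ = P[A.indicator (fun _ => (1 : ℝ))|H t] * P[B.indicator (fun _ => (1 : ℝ))|H t] :=
          mul_comm _ _
  -- (3) → (1)
  have h31 : (∀ t ∈ Set.Icc (0 : ℝ) T, ∀ ζ : Ω → ℝ, Integrable ζ P →
          StronglyMeasurable[F t] ζ → P[ζ | H T] =ᵐ[P] P[ζ | H t])
      → (∀ Y : ℝ → Ω → ℝ,
        (∀ t ∈ Set.Icc (0 : ℝ) T, StronglyMeasurable[H t] (Y t)) →
        (∀ t ∈ Set.Icc (0 : ℝ) T, MemLp (Y t) 2 P) →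
        (∀ s ∈ Set.Icc (0 : ℝ) T, ∀ t ∈ Set.Icc (0 : ℝ) T, s ≤ t → P[Y t | H s] =ᵐ[P] Y s) →
        ((∀ t ∈ Set.Icc (0 : ℝ) T, StronglyMeasurable[F t] (Y t)) ∧
          (∀ t ∈ Set.Icc (0 : ℝ) T, MemLp (Y t) 2 P) ∧
          (∀ s ∈ Set.Icc (0 : ℝ) T, ∀ t ∈ Set.Icc (0 : ℝ) T, s ≤ t →
            P[Y t | F s] =ᵐ[P] Y s))) := by
    intro h3 Y hadapt hL2 hmart
    have hYint : ∀ v ∈ Set.Icc (0 : ℝ) T, Integrable (Y v) P := fun v hv =>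
      (hL2 v hv).integrable one_le_two
    refine ⟨fun u hu => (hadapt u hu).mono (hHF u hu), hL2, fun s hs u hu hsu => ?_⟩
    refine (ae_eq_condExp_of_forall_setIntegral_eq (hFle s hs) (hYint u hu)
      (fun B _ _ => (hYint s hs).integrableOn) (fun B hB _ => ?_)
      (((hadapt s hs).mono (hHF s hs)).aestronglyMeasurable)).symm
    have hBm : MeasurableSet[m0] B := hFle s hs B hB
    have hkey := stmt6_key (hHmono s hs T hTmem hs.2) hHT
      ((hadapt u hu).mono (hHmono u hu T hTmem hu.2)) (hYint u hu) hBm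
      (h3 s hs (B.indicator (fun _ => (1 : ℝ))) (stmt6_ind_int hBm) (stmt6_ind_sm hB))
    rw [hkey]
    exact (setIntegral_congr_ae hBm ((hmart s hs u hu hsu).mono fun x hx _ => hx)).symm
  exact ⟨⟨h12, fun h2 => h31 (h23 h2)⟩, ⟨h23, h32⟩⟩
end

section
/- Let T > 0, x ∈ ℝ, g : [0, T] → ℝ, and let b̃ : [0, T] × ℝ × ℝ → ℝ be such that for each fixed t, the map (m, y) ↦ b̃(t, m, y) is nondecreasing in m and nondecreasing in y. Let X, Y : [0, T] → ℝ be continuous functions such that for all t ∈ [0, T], X(t) = x + ∫₀ᵗ b̃(s, M^X(s), X(s)) ds + g(t) and Y(t) = x + ∫₀ᵗ b̃(s, M^Y(s), Y(s)) ds + g(t), where both integrands are Lebesgue integrable on [0, T] and M^X(s) := max_{u ∈ [0, s]} X(u), M^Y(s) := max_{u ∈ [0, s]} Y(u). Then for every s ∈ [0, T], if X(s) > Y(s) then M^X(s) ≥ M^Y(s). -/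
open MeasureTheory

/-- Let `X, Y` be two continuous solutions on `[0, T]` of the path-dependent
integral equation `Z t = x + ∫₀ᵗ b̃ (s, M^Z s, Z s) ds + g t`, where `M^Z s` is the running
maximum of `Z` on `[0, s]` and `b̃ (t, ·, ·)` is nondecreasing in each of its last two
arguments. Then for every `s ∈ [0, T]`, if `X s > Y s` then `M^X s ≥ M^Y s`. -/
theorem stmt7 (T x : ℝ) (hT : 0 < T) (g : ℝ → ℝ) (btilde : ℝ → ℝ → ℝ → ℝ)
    (hmono : ∀ t : ℝ, ∀ m m' y y' : ℝ, m ≤ m' → y ≤ y' → btilde t m y ≤ btilde t m' y')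
    (X Y : ℝ → ℝ)
    (hXc : ContinuousOn X (Set.Icc 0 T)) (hYc : ContinuousOn Y (Set.Icc 0 T))
    (MX MY : ℝ → ℝ)
    (hMX : ∀ s ∈ Set.Icc (0 : ℝ) T, MX s = sSup (X '' Set.Icc 0 s))
    (hMY : ∀ s ∈ Set.Icc (0 : ℝ) T, MY s = sSup (Y '' Set.Icc 0 s))
    (hXint : IntervalIntegrable (fun s => btilde s (MX s) (X s)) volume 0 T)
    (hYint : IntervalIntegrable (fun s => btilde s (MY s) (Y s)) volume 0 T)
    (hX : ∀ t ∈ Set.Icc (0 : ℝ) T, X t = x + (∫ s in (0 : ℝ)..t, btilde s (MX s) (X s)) + g t)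
    (hY : ∀ t ∈ Set.Icc (0 : ℝ) T, Y t = x + (∫ s in (0 : ℝ)..t, btilde s (MY s) (Y s)) + g t) :
    ∀ s ∈ Set.Icc (0 : ℝ) T, Y s < X s → MY s ≤ MX s := by
  intro s hs hYXs
  by_contra hlt
  push_neg at hlt
  have hsub : Set.Icc (0 : ℝ) s ⊆ Set.Icc 0 T := Set.Icc_subset_Icc le_rfl hs.2
  have hXc' : ContinuousOn X (Set.Icc 0 s) := hXc.mono hsub
  have hYc' : ContinuousOn Y (Set.Icc 0 s) := hYc.mono hsub
  -- maximum point of Y on [0, s]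
  obtain ⟨u, huIcc, humax⟩ :=
    isCompact_Icc.exists_isMaxOn (Set.nonempty_Icc.2 hs.1) hYc'
  have hMYs : MY s = Y u := by
    rw [hMY s hs]
    refine IsGreatest.csSup_eq ⟨⟨u, huIcc, rfl⟩, ?_⟩
    rintro _ ⟨t, ht, rfl⟩
    exact humax ht
  -- X is bounded by MX s on [0, s]
  have hXbdd : BddAbove (X '' Set.Icc 0 s) :=
    (isCompact_Icc.image_of_continuousOn hXc').bddAbove
  have hXle : ∀ t ∈ Set.Icc (0 : ℝ) s, X t ≤ MX s := by
    intro t ht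
    rw [hMX s hs]
    exact le_csSup hXbdd ⟨t, ht, rfl⟩
  -- MX is monotone up to s
  have hMXmono : ∀ t ∈ Set.Icc (0 : ℝ) s, MX t ≤ MX s := by
    intro t ht
    rw [hMX t (hsub ht), hMX s hs]
    refine csSup_le_csSup hXbdd ⟨X 0, 0, ⟨le_rfl, ht.1⟩, rfl⟩
      (Set.image_mono (Set.Icc_subset_Icc le_rfl ht.2))
  -- MY t ≥ Y u for t ≥ u
  have hMYge : ∀ t, u ≤ t → t ≤ s → Y u ≤ MY t := by
    intro t hut hts
    have htT : t ∈ Set.Icc (0 : ℝ) T := ⟨huIcc.1.trans hut, hts.trans hs.2⟩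
    rw [hMY t htT]
    exact le_csSup
      ((isCompact_Icc.image_of_continuousOn
        (hYc.mono (Set.Icc_subset_Icc le_rfl htT.2))).bddAbove)
      ⟨u, ⟨huIcc.1, hut⟩, rfl⟩
  have hYuMX : MX s < Y u := by rw [← hMYs]; exact hlt
  have hXuYu : X u < Y u := lt_of_le_of_lt (hXle u huIcc) hYuMX
  -- the set where Y ≤ X after u
  set S : Set ℝ := {t | t ∈ Set.Icc u s ∧ Y t ≤ X t} with hSdef
  have hus : u ≤ s := huIcc.2
  have hSne : S.Nonempty := ⟨s, ⟨hus, le_rfl⟩, hYXs.le⟩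
  have hSbdd : BddBelow S := ⟨u, fun t ht => ht.1.1⟩
  have hSclosed : IsClosed S := by
    have : S = Set.Icc u s ∩ (fun t => (Y t, X t)) ⁻¹' {p : ℝ × ℝ | p.1 ≤ p.2} := by
      ext t; simp [hSdef, and_comm]
    rw [this]
    exact ContinuousOn.preimage_isClosed_of_isClosed
      (((hYc.mono (fun t ht => ⟨huIcc.1.trans ht.1, ht.2.trans hs.2⟩)).prodMk
        (hXc.mono (fun t ht => ⟨huIcc.1.trans ht.1, ht.2.trans hs.2⟩))))
      isClosed_Icc (isClosed_le continuous_fst continuous_snd)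
  set v := sInf S with hvdef
  have hvS : v ∈ S := hSclosed.csInf_mem hSne hSbdd
  have huv : u ≤ v := hvS.1.1
  have hvs : v ≤ s := hvS.1.2
  have hvT : v ∈ Set.Icc (0 : ℝ) T := ⟨huIcc.1.trans huv, hvs.trans hs.2⟩
  have huT : u ∈ Set.Icc (0 : ℝ) T := hsub huIcc
  -- pointwise comparison on [u, v)
  have hpt : ∀ t ∈ Set.Ico u v, btilde t (MX t) (X t) ≤ btilde t (MY t) (Y t) := by
    intro t ht
    have ht0s : t ∈ Set.Icc (0 : ℝ) s := ⟨huIcc.1.trans ht.1, ht.2.le.trans hvs⟩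
    have hXYt : X t ≤ Y t := by
      rcases eq_or_lt_of_le ht.1 with h | h
      · rw [← h]; exact hXuYu.le
      · by_contra hc
        push_neg at hc
        have : t ∈ S := ⟨⟨ht.1, ht0s.2⟩, hc.le⟩
        exact absurd (csInf_le hSbdd this) (not_le.2 ht.2)
    have hMle : MX t ≤ MY t :=
      le_trans (hMXmono t ht0s) (le_trans hYuMX.le (hMYge t ht.1 ht0s.2))
    exact hmono t _ _ _ _ hMle hXYt
  -- a.e. comparison on [u, v]
  have hae : (fun t => btilde t (MX t) (X t)) ≤ᵐ[volume.restrict (Set.Icc u v)]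
      (fun t => btilde t (MY t) (Y t)) := by
    have hne : ∀ᵐ t : ℝ ∂volume, t ≠ v := by
      have h0 : volume ({v} : Set ℝ) = 0 := Real.volume_singleton
      rw [ae_iff]
      simp only [ne_eq, not_not, Set.setOf_eq_eq_singleton]; exact h0
    refine (ae_restrict_iff' measurableSet_Icc).2 ?_
    filter_upwards [hne] with t htv ht
    exact hpt t ⟨ht.1, lt_of_le_of_ne ht.2 htv⟩
  have hint1 : IntervalIntegrable (fun t => btilde t (MX t) (X t)) volume 0 v :=
    hXint.mono_set (by
      rw [Set.uIcc_of_le hvT.1, Set.uIcc_of_le (hT.le)]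
      exact Set.Icc_subset_Icc le_rfl hvT.2)
  have hint2 : IntervalIntegrable (fun t => btilde t (MX t) (X t)) volume 0 u :=
    hXint.mono_set (by
      rw [Set.uIcc_of_le huT.1, Set.uIcc_of_le (hT.le)]
      exact Set.Icc_subset_Icc le_rfl huT.2)
  have hint3 : IntervalIntegrable (fun t => btilde t (MY t) (Y t)) volume 0 v :=
    hYint.mono_set (by
      rw [Set.uIcc_of_le hvT.1, Set.uIcc_of_le (hT.le)]
      exact Set.Icc_subset_Icc le_rfl hvT.2)
  have hint4 : IntervalIntegrable (fun t => btilde t (MY t) (Y t)) volume 0 u :=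
    hYint.mono_set (by
      rw [Set.uIcc_of_le huT.1, Set.uIcc_of_le (hT.le)]
      exact Set.Icc_subset_Icc le_rfl huT.2)
  have hintX : IntervalIntegrable (fun t => btilde t (MX t) (X t)) volume u v :=
    hint1.mono_set (by
      rw [Set.uIcc_of_le huv, Set.uIcc_of_le hvT.1]
      exact Set.Icc_subset_Icc huT.1 le_rfl)
  have hintY : IntervalIntegrable (fun t => btilde t (MY t) (Y t)) volume u v :=
    hint3.mono_set (by
      rw [Set.uIcc_of_le huv, Set.uIcc_of_le hvT.1]
      exact Set.Icc_subset_Icc huT.1 le_rfl)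
  have hineq : (∫ t in u..v, btilde t (MX t) (X t)) ≤ ∫ t in u..v, btilde t (MY t) (Y t) :=
    intervalIntegral.integral_mono_ae_restrict huv hintX hintY hae
  have hXsub : (∫ t in (0:ℝ)..v, btilde t (MX t) (X t))
      - (∫ t in (0:ℝ)..u, btilde t (MX t) (X t)) = ∫ t in u..v, btilde t (MX t) (X t) :=
    intervalIntegral.integral_interval_sub_left hint1 hint2
  have hYsub : (∫ t in (0:ℝ)..v, btilde t (MY t) (Y t))
      - (∫ t in (0:ℝ)..u, btilde t (MY t) (Y t)) = ∫ t in u..v, btilde t (MY t) (Y t) :=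
    intervalIntegral.integral_interval_sub_left hint3 hint4
  have hXv := hX v hvT
  have hXu := hX u huT
  have hYv := hY v hvT
  have hYu := hY u huT
  have hYvXv : Y v ≤ X v := hvS.2
  linarith
end

section
/- Let T > 0, x ∈ ℝ, g : [0, T] → ℝ, and let b̃ : [0, T] × ℝ × ℝ → ℝ be such that for each fixed t, the map (m, y) ↦ b̃(t, m, y) is nondecreasing in m and nondecreasing in y. Let X, Y : [0, T] → ℝ be continuous functions such that for all t ∈ [0, T], X(t) = x + ∫₀ᵗ b̃(s, M^X(s), X(s)) ds + g(t) and Y(t) = x + ∫₀ᵗ b̃(s, M^Y(s), Y(s)) ds + g(t), with both integrands Lebesgue integrable on [0, T], where M^Z(s) := max_{u ∈ [0, s]} Z(u). Then the pointwise maximum Z := t ↦ max(X(t), Y(t)) and the pointwise minimum V := t ↦ min(X(t), Y(t)) satisfy the same equation: Z(t) = x + ∫₀ᵗ b̃(s, M^Z(s), Z(s)) ds + g(t) and V(t) = x + ∫₀ᵗ b̃(s, M^V(s), V(s)) ds + g(t) for all t ∈ [0, T]. -/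
open MeasureTheory

private lemma bdd_img {T s : ℝ} {f : ℝ → ℝ} (hf : ContinuousOn f (Set.Icc 0 T))
    (hs : s ∈ Set.Icc (0 : ℝ) T) : BddAbove (f '' Set.Icc 0 s) :=
  (isCompact_Icc.image_of_continuousOn (hf.mono (Set.Icc_subset_Icc le_rfl hs.2))).bddAbove

/-- Key lemma: if `Y s < X s` then the running maximum of `Y` up to `s` is at most
that of `X`. -/
private lemma lemA (T x : ℝ) (g : ℝ → ℝ) (btilde : ℝ → ℝ → ℝ → ℝ)
    (hmono : ∀ t : ℝ, ∀ m m' y y' : ℝ, m ≤ m' → y ≤ y' → btilde t m y ≤ btilde t m' y')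
    (X Y : ℝ → ℝ)
    (hXc : ContinuousOn X (Set.Icc 0 T)) (hYc : ContinuousOn Y (Set.Icc 0 T))
    (MX MY : ℝ → ℝ)
    (hMX : ∀ s ∈ Set.Icc (0 : ℝ) T, MX s = sSup (X '' Set.Icc 0 s))
    (hMY : ∀ s ∈ Set.Icc (0 : ℝ) T, MY s = sSup (Y '' Set.Icc 0 s))
    (hXint : IntervalIntegrable (fun s => btilde s (MX s) (X s)) volume 0 T)
    (hYint : IntervalIntegrable (fun s => btilde s (MY s) (Y s)) volume 0 T)
    (hX : ∀ t ∈ Set.Icc (0 : ℝ) T, X t = x + (∫ s in (0 : ℝ)..t, btilde s (MX s) (X s)) + g t)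
    (hY : ∀ t ∈ Set.Icc (0 : ℝ) T, Y t = x + (∫ s in (0 : ℝ)..t, btilde s (MY s) (Y s)) + g t)
    {s : ℝ} (hs : s ∈ Set.Icc (0 : ℝ) T) (hlt : Y s < X s) : MY s ≤ MX s := by
  by_contra hcon
  push_neg at hcon
  have h0T : (0 : ℝ) ≤ T := hs.1.trans hs.2
  have huIcc : Set.uIcc (0 : ℝ) T = Set.Icc 0 T := Set.uIcc_of_le h0T
  -- pick a point `v` attaining the max of `Y` on `[0, s]`
  obtain ⟨v, hv, hvmax'⟩ := isCompact_Icc.exists_isMaxOn (Set.nonempty_Icc.2 hs.1)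
    (hYc.mono (Set.Icc_subset_Icc le_rfl hs.2))
  have hvmax : ∀ u ∈ Set.Icc (0:ℝ) s, Y u ≤ Y v := fun u hu => hvmax' hu
  have hvT : v ∈ Set.Icc (0 : ℝ) T := ⟨hv.1, hv.2.trans hs.2⟩
  have hYv : MY s = Y v := by
    rw [hMY s hs]
    refine le_antisymm (csSup_le ((Set.nonempty_Icc.2 hs.1).image Y) ?_)
      (le_csSup (bdd_img hYc hs) ⟨v, hv, rfl⟩)
    rintro _ ⟨u, hu, rfl⟩
    exact hvmax u hu
  have hXv : X v ≤ MX s := by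
    rw [hMX s hs]; exact le_csSup (bdd_img hXc hs) ⟨v, hv, rfl⟩
  have hXYv : X v < Y v := by rw [hYv] at hcon; exact lt_of_le_of_lt hXv hcon
  -- first time `w ≥ v` where `Y ≤ X`
  set S : Set ℝ := {σ | σ ∈ Set.Icc v s ∧ Y σ ≤ X σ} with hSdef
  have hsubvs : Set.Icc v s ⊆ Set.Icc 0 T := Set.Icc_subset_Icc hv.1 hs.2
  have hSeq : S = Set.Icc v s ∩ (fun σ => X σ - Y σ) ⁻¹' Set.Ici 0 := by
    ext σ; simp [hSdef, sub_nonneg, and_comm]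
  have hSc : IsClosed S := by
    rw [hSeq]
    exact ContinuousOn.preimage_isClosed_of_isClosed
      ((hXc.mono hsubvs).sub (hYc.mono hsubvs)) isClosed_Icc isClosed_Ici
  have hSne : s ∈ S := ⟨⟨hv.2, le_rfl⟩, hlt.le⟩
  have hSbd : BddBelow S := ⟨v, fun σ hσ => hσ.1.1⟩
  set w : ℝ := sInf S with hwdef
  have hwS : w ∈ S := hSc.csInf_mem ⟨s, hSne⟩ hSbd
  have hvw : v ≤ w := hwS.1.1
  have hws : w ≤ s := hwS.1.2
  have hwT : w ∈ Set.Icc (0 : ℝ) T := ⟨hv.1.trans hvw, hws.trans hs.2⟩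
  -- pointwise comparison of the drifts on `[v, w)`
  have hpt : ∀ σ ∈ Set.Ico v w, btilde σ (MX σ) (X σ) ≤ btilde σ (MY σ) (Y σ) := by
    intro σ hσ
    have hσs : σ ∈ Set.Icc v s := ⟨hσ.1, hσ.2.le.trans hws⟩
    have hσT : σ ∈ Set.Icc (0 : ℝ) T := hsubvs hσs
    have hnots : σ ∉ S := notMem_of_lt_csInf hσ.2 hSbd
    have hXYσ : X σ < Y σ := by
      by_contra h
      exact hnots ⟨hσs, not_lt.1 h⟩
    have hMXσ : MX σ ≤ MX s := by
      rw [hMX σ hσT, hMX s hs]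
      exact csSup_le_csSup (bdd_img hXc hs) ((Set.nonempty_Icc.2 hσT.1).image X)
        (Set.image_mono (Set.Icc_subset_Icc le_rfl hσs.2))
    have hMYσ : Y v ≤ MY σ := by
      rw [hMY σ hσT]
      exact le_csSup (bdd_img hYc hσT) ⟨v, ⟨hv.1, hσ.1⟩, rfl⟩
    exact hmono σ _ _ _ _ (by linarith [hYv ▸ hMYσ]) hXYσ.le
  -- integrability on subintervals
  have hsub : ∀ {a b : ℝ}, a ∈ Set.Icc (0 : ℝ) T → b ∈ Set.Icc (0 : ℝ) T →
      Set.uIcc a b ⊆ Set.uIcc 0 T := by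
    intro a b ha hb
    exact Set.uIcc_subset_uIcc (huIcc ▸ ha) (huIcc ▸ hb)
  have h0T' : (0 : ℝ) ∈ Set.Icc (0 : ℝ) T := Set.left_mem_Icc.2 h0T
  have hbXvw : IntervalIntegrable (fun σ => btilde σ (MX σ) (X σ)) volume v w :=
    hXint.mono_set (hsub hvT hwT)
  have hbYvw : IntervalIntegrable (fun σ => btilde σ (MY σ) (Y σ)) volume v w :=
    hYint.mono_set (hsub hvT hwT)
  have hbX0v : IntervalIntegrable (fun σ => btilde σ (MX σ) (X σ)) volume 0 v :=
    hXint.mono_set (hsub h0T' hvT)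
  have hbX0w : IntervalIntegrable (fun σ => btilde σ (MX σ) (X σ)) volume 0 w :=
    hXint.mono_set (hsub h0T' hwT)
  have hbY0v : IntervalIntegrable (fun σ => btilde σ (MY σ) (Y σ)) volume 0 v :=
    hYint.mono_set (hsub h0T' hvT)
  have hbY0w : IntervalIntegrable (fun σ => btilde σ (MY σ) (Y σ)) volume 0 w :=
    hYint.mono_set (hsub h0T' hwT)
  -- a.e. comparison on `[v, w]`
  have hae : (fun σ => btilde σ (MX σ) (X σ)) ≤ᵐ[volume.restrict (Set.Icc v w)]
      (fun σ => btilde σ (MY σ) (Y σ)) := by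
    rw [← Measure.restrict_congr_set Ico_ae_eq_Icc]
    exact (ae_restrict_mem measurableSet_Ico).mono hpt
  have hIle : (∫ σ in v..w, btilde σ (MX σ) (X σ)) ≤ ∫ σ in v..w, btilde σ (MY σ) (Y σ) :=
    intervalIntegral.integral_mono_ae_restrict hvw hbXvw hbYvw hae
  -- increments
  have e3 : (∫ σ in (0 : ℝ)..w, btilde σ (MX σ) (X σ)) -
      (∫ σ in (0 : ℝ)..v, btilde σ (MX σ) (X σ)) = ∫ σ in v..w, btilde σ (MX σ) (X σ) :=
    intervalIntegral.integral_interval_sub_left hbX0w hbX0v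
  have e4 : (∫ σ in (0 : ℝ)..w, btilde σ (MY σ) (Y σ)) -
      (∫ σ in (0 : ℝ)..v, btilde σ (MY σ) (Y σ)) = ∫ σ in v..w, btilde σ (MY σ) (Y σ) :=
    intervalIntegral.integral_interval_sub_left hbY0w hbY0v
  have eXw := hX w hwT
  have eXv := hX v hvT
  have eYw := hY w hwT
  have eYv := hY v hvT
  have hYwXw : Y w ≤ X w := hwS.2
  linarith

/-- Solutions never cross: it is impossible that `X < Y` at `a` and `Y < X` at a later `b`. -/
private lemma auxNoCross (T x : ℝ) (g : ℝ → ℝ) (btilde : ℝ → ℝ → ℝ → ℝ)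
    (hmono : ∀ t : ℝ, ∀ m m' y y' : ℝ, m ≤ m' → y ≤ y' → btilde t m y ≤ btilde t m' y')
    (X Y : ℝ → ℝ)
    (hXc : ContinuousOn X (Set.Icc 0 T)) (hYc : ContinuousOn Y (Set.Icc 0 T))
    (MX MY : ℝ → ℝ)
    (hMX : ∀ s ∈ Set.Icc (0 : ℝ) T, MX s = sSup (X '' Set.Icc 0 s))
    (hMY : ∀ s ∈ Set.Icc (0 : ℝ) T, MY s = sSup (Y '' Set.Icc 0 s))
    (hXint : IntervalIntegrable (fun s => btilde s (MX s) (X s)) volume 0 T)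
    (hYint : IntervalIntegrable (fun s => btilde s (MY s) (Y s)) volume 0 T)
    (hX : ∀ t ∈ Set.Icc (0 : ℝ) T, X t = x + (∫ s in (0 : ℝ)..t, btilde s (MX s) (X s)) + g t)
    (hY : ∀ t ∈ Set.Icc (0 : ℝ) T, Y t = x + (∫ s in (0 : ℝ)..t, btilde s (MY s) (Y s)) + g t)
    {a b : ℝ} (haT : a ∈ Set.Icc (0 : ℝ) T) (hbT : b ∈ Set.Icc (0 : ℝ) T) (hab : a ≤ b)
    (h1 : X a < Y a) (h2 : Y b < X b) : False := by
  have h0T : (0 : ℝ) ≤ T := haT.1.trans haT.2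
  have huIcc : Set.uIcc (0 : ℝ) T = Set.Icc 0 T := Set.uIcc_of_le h0T
  set S : Set ℝ := {σ | σ ∈ Set.Icc a b ∧ Y σ ≤ X σ} with hSdef
  have hsubab : Set.Icc a b ⊆ Set.Icc 0 T := Set.Icc_subset_Icc haT.1 hbT.2
  have hSeq : S = Set.Icc a b ∩ (fun σ => X σ - Y σ) ⁻¹' Set.Ici 0 := by
    ext σ; simp [hSdef, sub_nonneg, and_comm]
  have hSc : IsClosed S := by
    rw [hSeq]
    exact ContinuousOn.preimage_isClosed_of_isClosed
      ((hXc.mono hsubab).sub (hYc.mono hsubab)) isClosed_Icc isClosed_Ici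
  have hSne : b ∈ S := ⟨⟨hab, le_rfl⟩, h2.le⟩
  have hSbd : BddBelow S := ⟨a, fun σ hσ => hσ.1.1⟩
  set w : ℝ := sInf S with hwdef
  have hwS : w ∈ S := hSc.csInf_mem ⟨b, hSne⟩ hSbd
  have haw : a ≤ w := hwS.1.1
  have hwb : w ≤ b := hwS.1.2
  have hwT : w ∈ Set.Icc (0 : ℝ) T := ⟨haT.1.trans haw, hwb.trans hbT.2⟩
  have hpt : ∀ σ ∈ Set.Ico a w, btilde σ (MX σ) (X σ) ≤ btilde σ (MY σ) (Y σ) := by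
    intro σ hσ
    have hσb : σ ∈ Set.Icc a b := ⟨hσ.1, hσ.2.le.trans hwb⟩
    have hσT : σ ∈ Set.Icc (0 : ℝ) T := hsubab hσb
    have hnots : σ ∉ S := notMem_of_lt_csInf hσ.2 hSbd
    have hXYσ : X σ < Y σ := by
      by_contra h
      exact hnots ⟨hσb, not_lt.1 h⟩
    have hMXY : MX σ ≤ MY σ :=
      lemA T x g btilde hmono Y X hYc hXc MY MX hMY hMX hYint hXint hY hX hσT hXYσ
    exact hmono σ _ _ _ _ hMXY hXYσ.le
  have hsub : ∀ {c d : ℝ}, c ∈ Set.Icc (0 : ℝ) T → d ∈ Set.Icc (0 : ℝ) T →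
      Set.uIcc c d ⊆ Set.uIcc 0 T := by
    intro c d hc hd
    exact Set.uIcc_subset_uIcc (huIcc ▸ hc) (huIcc ▸ hd)
  have h0T' : (0 : ℝ) ∈ Set.Icc (0 : ℝ) T := Set.left_mem_Icc.2 h0T
  have hbXaw : IntervalIntegrable (fun σ => btilde σ (MX σ) (X σ)) volume a w :=
    hXint.mono_set (hsub haT hwT)
  have hbYaw : IntervalIntegrable (fun σ => btilde σ (MY σ) (Y σ)) volume a w :=
    hYint.mono_set (hsub haT hwT)
  have hbX0a : IntervalIntegrable (fun σ => btilde σ (MX σ) (X σ)) volume 0 a :=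
    hXint.mono_set (hsub h0T' haT)
  have hbX0w : IntervalIntegrable (fun σ => btilde σ (MX σ) (X σ)) volume 0 w :=
    hXint.mono_set (hsub h0T' hwT)
  have hbY0a : IntervalIntegrable (fun σ => btilde σ (MY σ) (Y σ)) volume 0 a :=
    hYint.mono_set (hsub h0T' haT)
  have hbY0w : IntervalIntegrable (fun σ => btilde σ (MY σ) (Y σ)) volume 0 w :=
    hYint.mono_set (hsub h0T' hwT)
  have hae : (fun σ => btilde σ (MX σ) (X σ)) ≤ᵐ[volume.restrict (Set.Icc a w)]
      (fun σ => btilde σ (MY σ) (Y σ)) := by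
    rw [← Measure.restrict_congr_set Ico_ae_eq_Icc]
    exact (ae_restrict_mem measurableSet_Ico).mono hpt
  have hIle : (∫ σ in a..w, btilde σ (MX σ) (X σ)) ≤ ∫ σ in a..w, btilde σ (MY σ) (Y σ) :=
    intervalIntegral.integral_mono_ae_restrict haw hbXaw hbYaw hae
  have e3 : (∫ σ in (0 : ℝ)..w, btilde σ (MX σ) (X σ)) -
      (∫ σ in (0 : ℝ)..a, btilde σ (MX σ) (X σ)) = ∫ σ in a..w, btilde σ (MX σ) (X σ) :=
    intervalIntegral.integral_interval_sub_left hbX0w hbX0a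
  have e4 : (∫ σ in (0 : ℝ)..w, btilde σ (MY σ) (Y σ)) -
      (∫ σ in (0 : ℝ)..a, btilde σ (MY σ) (Y σ)) = ∫ σ in a..w, btilde σ (MY σ) (Y σ) :=
    intervalIntegral.integral_interval_sub_left hbY0w hbY0a
  have eXw := hX w hwT
  have eXa := hX a haT
  have eYw := hY w hwT
  have eYa := hY a haT
  have hYwXw : Y w ≤ X w := hwS.2
  linarith

/-- Let `X, Y` be two continuous solutions on `[0, T]` of the path-dependent
integral equation `Z t = x + ∫₀ᵗ b̃ (s, M^Z s, Z s) ds + g t`, where `M^Z s` is the running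
maximum of `Z` on `[0, s]` and `b̃ (t, ·, ·)` is nondecreasing in each of its last two
arguments. Then the pointwise maximum `max (X t) (Y t)` and the pointwise minimum
`min (X t) (Y t)` satisfy the same equation. -/
theorem stmt8 (T x : ℝ) (hT : 0 < T) (g : ℝ → ℝ) (btilde : ℝ → ℝ → ℝ → ℝ)
    (hmono : ∀ t : ℝ, ∀ m m' y y' : ℝ, m ≤ m' → y ≤ y' → btilde t m y ≤ btilde t m' y')
    (X Y : ℝ → ℝ)
    (hXc : ContinuousOn X (Set.Icc 0 T)) (hYc : ContinuousOn Y (Set.Icc 0 T))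
    (MX MY : ℝ → ℝ)
    (hMX : ∀ s ∈ Set.Icc (0 : ℝ) T, MX s = sSup (X '' Set.Icc 0 s))
    (hMY : ∀ s ∈ Set.Icc (0 : ℝ) T, MY s = sSup (Y '' Set.Icc 0 s))
    (hXint : IntervalIntegrable (fun s => btilde s (MX s) (X s)) volume 0 T)
    (hYint : IntervalIntegrable (fun s => btilde s (MY s) (Y s)) volume 0 T)
    (hX : ∀ t ∈ Set.Icc (0 : ℝ) T, X t = x + (∫ s in (0 : ℝ)..t, btilde s (MX s) (X s)) + g t)
    (hY : ∀ t ∈ Set.Icc (0 : ℝ) T, Y t = x + (∫ s in (0 : ℝ)..t, btilde s (MY s) (Y s)) + g t) :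
    (∀ t ∈ Set.Icc (0 : ℝ) T,
      max (X t) (Y t) = x + (∫ s in (0 : ℝ)..t,
        btilde s (sSup ((fun u => max (X u) (Y u)) '' Set.Icc 0 s)) (max (X s) (Y s))) + g t) ∧
    (∀ t ∈ Set.Icc (0 : ℝ) T,
      min (X t) (Y t) = x + (∫ s in (0 : ℝ)..t,
        btilde s (sSup ((fun u => min (X u) (Y u)) '' Set.Icc 0 s)) (min (X s) (Y s))) + g t) := by
  -- dichotomy: one of the two solutions dominates on all of `[0, T]`
  have hdich : (∀ t ∈ Set.Icc (0 : ℝ) T, Y t ≤ X t) ∨ (∀ t ∈ Set.Icc (0 : ℝ) T, X t ≤ Y t) := by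
    by_contra h
    push_neg at h
    obtain ⟨⟨a, haT, ha⟩, ⟨b, hbT, hb⟩⟩ := h
    rcases le_total a b with hab | hab
    · exact auxNoCross T x g btilde hmono X Y hXc hYc MX MY hMX hMY hXint hYint hX hY
        haT hbT hab ha hb
    · exact auxNoCross T x g btilde (fun t m m' y y' hm hy => hmono t m m' y y' hm hy)
        Y X hYc hXc MY MX hMY hMX hYint hXint hY hX hbT haT hab hb ha
  rcases hdich with hc | hc
  · constructor
    · intro t ht
      have himg : ∀ σ ∈ Set.uIcc (0 : ℝ) t,
          btilde σ (sSup ((fun u => max (X u) (Y u)) '' Set.Icc 0 σ)) (max (X σ) (Y σ)) =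
          btilde σ (MX σ) (X σ) := by
        intro σ hσ
        rw [Set.uIcc_of_le ht.1] at hσ
        have hσT : σ ∈ Set.Icc (0 : ℝ) T := ⟨hσ.1, hσ.2.trans ht.2⟩
        have h1 : (fun u => max (X u) (Y u)) '' Set.Icc 0 σ = X '' Set.Icc 0 σ :=
          Set.image_congr (fun u hu => max_eq_left (hc u ⟨hu.1, hu.2.trans hσT.2⟩))
        rw [h1, ← hMX σ hσT, max_eq_left (hc σ hσT)]
      rw [max_eq_left (hc t ht), intervalIntegral.integral_congr himg]
      exact hX t ht
    · intro t ht
      have himg : ∀ σ ∈ Set.uIcc (0 : ℝ) t,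
          btilde σ (sSup ((fun u => min (X u) (Y u)) '' Set.Icc 0 σ)) (min (X σ) (Y σ)) =
          btilde σ (MY σ) (Y σ) := by
        intro σ hσ
        rw [Set.uIcc_of_le ht.1] at hσ
        have hσT : σ ∈ Set.Icc (0 : ℝ) T := ⟨hσ.1, hσ.2.trans ht.2⟩
        have h1 : (fun u => min (X u) (Y u)) '' Set.Icc 0 σ = Y '' Set.Icc 0 σ :=
          Set.image_congr (fun u hu => min_eq_right (hc u ⟨hu.1, hu.2.trans hσT.2⟩))
        rw [h1, ← hMY σ hσT, min_eq_right (hc σ hσT)]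
      rw [min_eq_right (hc t ht), intervalIntegral.integral_congr himg]
      exact hY t ht
  · constructor
    · intro t ht
      have himg : ∀ σ ∈ Set.uIcc (0 : ℝ) t,
          btilde σ (sSup ((fun u => max (X u) (Y u)) '' Set.Icc 0 σ)) (max (X σ) (Y σ)) =
          btilde σ (MY σ) (Y σ) := by
        intro σ hσ
        rw [Set.uIcc_of_le ht.1] at hσ
        have hσT : σ ∈ Set.Icc (0 : ℝ) T := ⟨hσ.1, hσ.2.trans ht.2⟩
        have h1 : (fun u => max (X u) (Y u)) '' Set.Icc 0 σ = Y '' Set.Icc 0 σ :=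
          Set.image_congr (fun u hu => max_eq_right (hc u ⟨hu.1, hu.2.trans hσT.2⟩))
        rw [h1, ← hMY σ hσT, max_eq_right (hc σ hσT)]
      rw [max_eq_right (hc t ht), intervalIntegral.integral_congr himg]
      exact hY t ht
    · intro t ht
      have himg : ∀ σ ∈ Set.uIcc (0 : ℝ) t,
          btilde σ (sSup ((fun u => min (X u) (Y u)) '' Set.Icc 0 σ)) (min (X σ) (Y σ)) =
          btilde σ (MX σ) (X σ) := by
        intro σ hσ
        rw [Set.uIcc_of_le ht.1] at hσ
        have hσT : σ ∈ Set.Icc (0 : ℝ) T := ⟨hσ.1, hσ.2.trans ht.2⟩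
        have h1 : (fun u => min (X u) (Y u)) '' Set.Icc 0 σ = X '' Set.Icc 0 σ :=
          Set.image_congr (fun u hu => min_eq_left (hc u ⟨hu.1, hu.2.trans hσT.2⟩))
        rw [h1, ← hMX σ hσT, min_eq_left (hc σ hσT)]
      rw [min_eq_left (hc t ht), intervalIntegral.integral_congr himg]
      exact hX t ht
end

section
/- Let T > 0, x ∈ ℝ, g : [0, T] → ℝ, and let b̃ : [0, T] × ℝ × ℝ → ℝ be such that for each fixed t, the map (m, y) ↦ b̃(t, m, y) is nondecreasing in m and nondecreasing in y. Let X, Y : [0, T] → ℝ be continuous functions such that for all t ∈ [0, T], X(t) = x + ∫₀ᵗ b̃(s, M^X(s), X(s)) ds + g(t) and Y(t) = x + ∫₀ᵗ b̃(s, M^Y(s), Y(s)) ds + g(t), with both integrands Lebesgue integrable on [0, T], where M^Z(s) := max_{u ∈ [0, s]} Z(u). Then for Lebesgue-almost every t ∈ [0, T], if X(t) = Y(t) then b̃(t, M^X(t), X(t)) = b̃(t, M^Y(t), Y(t)). -/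
open MeasureTheory Set Filter Metric
open scoped Topology

/-- The set of points of `E ⊆ ℝ` that are isolated in `E` is countable. -/
lemma countable_isolated_pts (E : Set ℝ) :
    {t | t ∈ E ∧ 𝓝[E \ {t}] t = ⊥}.Countable := by
  have hsub : {t | t ∈ E ∧ 𝓝[E \ {t}] t = ⊥} ⊆
      ⋃ p : ℚ × ℚ, {t | t ∈ E ∧ (p.1 : ℝ) < t ∧ t < (p.2 : ℝ) ∧
        ∀ s ∈ E, (p.1 : ℝ) < s → s < (p.2 : ℝ) → s = t} := by
    rintro t ⟨htE, hbot⟩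
    have hemp : (∅ : Set ℝ) ∈ 𝓝[E \ {t}] t := by simp [hbot]
    rcases mem_nhdsWithin.1 hemp with ⟨U, hUo, htU, hU⟩
    rcases Metric.isOpen_iff.1 hUo t htU with ⟨ε, hε, hball⟩
    obtain ⟨q₁, hq₁, hq₁'⟩ := exists_rat_btwn (show t - ε < t by linarith)
    obtain ⟨q₂, hq₂, hq₂'⟩ := exists_rat_btwn (show t < t + ε by linarith)
    refine mem_iUnion.2 ⟨(q₁, q₂), htE, hq₁', hq₂, fun s hs h1 h2 => ?_⟩
    by_contra hst
    have hsball : s ∈ Metric.ball t ε := by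
      simp only [Metric.mem_ball, Real.dist_eq, abs_lt]
      constructor <;> linarith
    exact hU ⟨hball hsball, hs, hst⟩
  refine Set.Countable.mono hsub (Set.countable_iUnion fun p => ?_)
  exact Set.Subsingleton.countable fun a ha b hb =>
    (ha.2.2.2 b hb.1 hb.2.1 hb.2.2.1).symm

/-- Let `X, Y` be two continuous solutions on `[0, T]` of the path-dependent
integral equation `Z t = x + ∫₀ᵗ b̃ (s, M^Z s, Z s) ds + g t`, where `M^Z s` is the running
maximum of `Z` on `[0, s]` and `b̃ (t, ·, ·)` is nondecreasing in each of its last two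
arguments. Then for Lebesgue-almost every `t ∈ [0, T]`, if `X t = Y t` then
`b̃ (t, M^X t, X t) = b̃ (t, M^Y t, Y t)`. -/
theorem stmt9 (T x : ℝ) (hT : 0 < T) (g : ℝ → ℝ) (btilde : ℝ → ℝ → ℝ → ℝ)
    (hmono : ∀ t : ℝ, ∀ m m' y y' : ℝ, m ≤ m' → y ≤ y' → btilde t m y ≤ btilde t m' y')
    (X Y : ℝ → ℝ)
    (hXc : ContinuousOn X (Set.Icc 0 T)) (hYc : ContinuousOn Y (Set.Icc 0 T))
    (MX MY : ℝ → ℝ)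
    (hMX : ∀ s ∈ Set.Icc (0 : ℝ) T, MX s = sSup (X '' Set.Icc 0 s))
    (hMY : ∀ s ∈ Set.Icc (0 : ℝ) T, MY s = sSup (Y '' Set.Icc 0 s))
    (hXint : IntervalIntegrable (fun s => btilde s (MX s) (X s)) volume 0 T)
    (hYint : IntervalIntegrable (fun s => btilde s (MY s) (Y s)) volume 0 T)
    (hX : ∀ t ∈ Set.Icc (0 : ℝ) T, X t = x + (∫ s in (0 : ℝ)..t, btilde s (MX s) (X s)) + g t)
    (hY : ∀ t ∈ Set.Icc (0 : ℝ) T, Y t = x + (∫ s in (0 : ℝ)..t, btilde s (MY s) (Y s)) + g t) :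
    ∀ᵐ t ∂(volume.restrict (Set.Icc (0 : ℝ) T)),
      X t = Y t → btilde t (MX t) (X t) = btilde t (MY t) (Y t) := by
  set f : ℝ → ℝ := fun s => btilde s (MX s) (X s) - btilde s (MY s) (Y s) with hfdef
  have hfint : IntervalIntegrable f volume 0 T := hXint.sub hYint
  have hfIcc : IntegrableOn f (Set.Icc 0 T) volume :=
    (intervalIntegrable_iff_integrableOn_Icc_of_le hT.le).1 hfint
  set F : ℝ → ℝ := (Set.Icc (0:ℝ) T).indicator f with hFdef
  have hFint : Integrable F volume := (integrable_indicator_iff measurableSet_Icc).2 hfIcc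
  have hFloc : LocallyIntegrable F volume := hFint.locallyIntegrable
  set E : Set ℝ := Set.Icc 0 T ∩ {t | X t = Y t} with hEdef
  -- key identity
  have hkey : ∀ t ∈ Set.Icc (0:ℝ) T, (∫ s in (0:ℝ)..t, f s) = X t - Y t := by
    intro t ht
    have hsub : Set.uIcc (0:ℝ) t ⊆ Set.uIcc 0 T := by
      rw [Set.uIcc_of_le ht.1, Set.uIcc_of_le hT.le]
      exact Set.Icc_subset_Icc le_rfl ht.2
    have h1 : IntervalIntegrable (fun s => btilde s (MX s) (X s)) volume 0 t :=
      hXint.mono_set hsub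
    have h2 : IntervalIntegrable (fun s => btilde s (MY s) (Y s)) volume 0 t :=
      hYint.mono_set hsub
    have : (∫ s in (0:ℝ)..t, f s)
        = (∫ s in (0:ℝ)..t, btilde s (MX s) (X s)) - ∫ s in (0:ℝ)..t, btilde s (MY s) (Y s) :=
      intervalIntegral.integral_sub h1 h2
    rw [this]
    have hx1 := hX t ht
    have hy1 := hY t ht
    linarith
  -- interval integral with endpoints in E vanishes
  have hzero : ∀ a ∈ E, ∀ b ∈ E, a ≤ b → (∫ s in Set.Icc a b, F s) = 0 := by
    intro a ha b hb hab
    have haI : a ∈ Set.Icc (0:ℝ) T := ha.1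
    have hbI : b ∈ Set.Icc (0:ℝ) T := hb.1
    have hsub : Set.Icc a b ⊆ Set.Icc (0:ℝ) T := Set.Icc_subset_Icc haI.1 hbI.2
    have h1 : (∫ s in Set.Icc a b, F s) = ∫ s in Set.Icc a b, f s := by
      rw [hFdef, setIntegral_indicator measurableSet_Icc,
        Set.inter_eq_self_of_subset_left hsub]
    have hIa : IntervalIntegrable f volume 0 a := hfint.mono_set (by
      rw [Set.uIcc_of_le haI.1, Set.uIcc_of_le hT.le]
      exact Set.Icc_subset_Icc le_rfl haI.2)
    have hIab : IntervalIntegrable f volume a b := hfint.mono_set (by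
      rw [Set.uIcc_of_le hab, Set.uIcc_of_le hT.le]
      exact Set.Icc_subset_Icc haI.1 hbI.2)
    have hadd := intervalIntegral.integral_add_adjacent_intervals hIa hIab
    have h0a := hkey a haI
    have h0b := hkey b hbI
    have hXa : X a = Y a := ha.2
    have hXb : X b = Y b := hb.2
    rw [h1, MeasureTheory.integral_Icc_eq_integral_Ioc,
      ← intervalIntegral.integral_of_le hab]
    linarith
  have hLeb := IsUnifLocDoublingMeasure.ae_tendsto_average (μ := (volume : Measure ℝ)) hFloc 1
  have hLeb' := ae_restrict_of_ae (μ := (volume : Measure ℝ)) (s := Set.Icc 0 T) hLeb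
  have hIso : ∀ᵐ t ∂(volume.restrict (Set.Icc (0:ℝ) T)),
      t ∉ {t | t ∈ E ∧ 𝓝[E \ {t}] t = ⊥} := by
    refine ae_restrict_of_ae ?_
    exact measure_eq_zero_iff_ae_notMem.1 ((countable_isolated_pts E).measure_zero _)
  filter_upwards [hLeb', ae_restrict_mem measurableSet_Icc, hIso] with t hLt htI htn hXY
  have htE : t ∈ E := ⟨htI, hXY⟩
  haveI hne : (𝓝[E \ {t}] t).NeBot := ⟨fun h => htn ⟨htE, h⟩⟩
  obtain ⟨u, hu⟩ := (𝓝[E \ {t}] t).exists_seq_tendsto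
  have humem : ∀ᶠ n in Filter.atTop, u n ∈ E \ {t} := hu self_mem_nhdsWithin
  have hut : Filter.Tendsto u Filter.atTop (𝓝 t) := hu.mono_right nhdsWithin_le_nhds
  set δ : ℕ → ℝ := fun n => |u n - t| / 2 with hδdef
  set w : ℕ → ℝ := fun n => (u n + t) / 2 with hwdef
  have hδ : Filter.Tendsto δ Filter.atTop (𝓝[>] 0) := by
    rw [tendsto_nhdsWithin_iff]
    constructor
    · have h0 : Filter.Tendsto (fun n => u n - t) Filter.atTop (𝓝 0) := by
        simpa using hut.sub_const t
      have := (h0.abs).div_const 2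
      simpa [hδdef] using this
    · filter_upwards [humem] with n hn
      have hne' : u n ≠ t := hn.2
      have : (0:ℝ) < |u n - t| := abs_pos.2 (sub_ne_zero.2 hne')
      exact div_pos this two_pos
  have hmem : ∀ᶠ n in Filter.atTop, t ∈ Metric.closedBall (w n) (1 * δ n) := by
    filter_upwards with n
    rw [Metric.mem_closedBall, Real.dist_eq, one_mul, hwdef, hδdef]
    have : t - (u n + t) / 2 = -((u n - t)/2) := by ring
    rw [this, abs_neg, abs_div]
    simp [abs_of_nonneg]
  have hconv := hLt w δ hδ hmem
  have hzero' : ∀ᶠ n in Filter.atTop,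
      (⨍ y in Metric.closedBall (w n) (δ n), F y) = 0 := by
    filter_upwards [humem] with n hn
    have hball : Metric.closedBall (w n) (δ n) = Set.Icc (min t (u n)) (max t (u n)) := by
      rw [Real.closedBall_eq_Icc]
      have hw : w n = (u n + t) / 2 := rfl
      have hd : δ n = |u n - t| / 2 := rfl
      rcases le_total t (u n) with h | h
      · rw [min_eq_left h, max_eq_right h, hw, hd, abs_of_nonneg (by linarith)]
        congr 1 <;> ring
      · rw [min_eq_right h, max_eq_left h, hw, hd, abs_of_nonpos (by linarith)]
        congr 1 <;> ring
    rw [setAverage_eq, hball]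
    rcases le_total t (u n) with h | h
    · rw [min_eq_left h, max_eq_right h, hzero t htE (u n) hn.1 h, smul_zero]
    · rw [min_eq_right h, max_eq_left h, hzero (u n) hn.1 t htE h, smul_zero]
  have hF0 : F t = 0 :=
    tendsto_nhds_unique hconv (Filter.Tendsto.congr' (hzero'.mono fun n h => h.symm) tendsto_const_nhds)
  have hFt : F t = f t := Set.indicator_of_mem htI f
  have hf0 : btilde t (MX t) (X t) - btilde t (MY t) (Y t) = 0 := by
    have : f t = 0 := by rw [← hFt]; exact hF0
    simpa [hfdef] using this
  linarith
end

section
/- Let T > 0 and let f : [0, T] → ℝ be Lebesgue integrable. Define H(t) := ∫₀ᵗ f(s) ds. Then for every t ∈ [0, T], max(H(t), 0) = ∫₀ᵗ 1_{{H(s) > 0}} f(s) ds, where 1_{{H(s) > 0}} denotes the indicator of the set {s : H(s) > 0}. -/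
open MeasureTheory Set Filter

noncomputable def cL (V : Set ℝ) (x : ℝ) : ℝ := sInf {y | Set.Ioc y x ⊆ V}
noncomputable def cR (V : Set ℝ) (x : ℝ) : ℝ := sSup {y | Set.Ico x y ⊆ V}

section comp

variable {V : Set ℝ} {a b x z : ℝ}

lemma L_nonempty : ({y | Set.Ioc y x ⊆ V}).Nonempty :=
  ⟨x, by simp [Set.Ioc_self]⟩

lemma R_nonempty : ({y | Set.Ico x y ⊆ V}).Nonempty :=
  ⟨x, by simp [Set.Ico_self]⟩

lemma L_bddBelow (hVab : V ⊆ Set.Ioo a b) (hx : x ∈ V) :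
    BddBelow {y | Set.Ioc y x ⊆ V} := by
  refine ⟨a, fun y hy => ?_⟩
  by_contra h
  push_neg at h
  have hax : a < x := (hVab hx).1
  exact lt_irrefl a (hVab (hy ⟨h, hax.le⟩)).1

lemma R_bddAbove (hVab : V ⊆ Set.Ioo a b) (hx : x ∈ V) :
    BddAbove {y | Set.Ico x y ⊆ V} := by
  refine ⟨b, fun y hy => ?_⟩
  by_contra h
  push_neg at h
  have hxb : x < b := (hVab hx).2
  exact lt_irrefl b (hVab (hy ⟨hxb.le, h⟩)).2

lemma cL_lt (hV : IsOpen V) (hVab : V ⊆ Set.Ioo a b) (hx : x ∈ V) : cL V x < x := by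
  obtain ⟨ε, hε, hball⟩ := Metric.isOpen_iff.mp hV x hx
  rw [Real.ball_eq_Ioo] at hball
  have hmem : x - ε ∈ {y | Set.Ioc y x ⊆ V} := by
    intro y hy
    exact hball ⟨hy.1, lt_of_le_of_lt hy.2 (by linarith)⟩
  calc cL V x ≤ x - ε := csInf_le (L_bddBelow hVab hx) hmem
  _ < x := by linarith

lemma lt_cR (hV : IsOpen V) (hVab : V ⊆ Set.Ioo a b) (hx : x ∈ V) : x < cR V x := by
  obtain ⟨ε, hε, hball⟩ := Metric.isOpen_iff.mp hV x hx
  rw [Real.ball_eq_Ioo] at hball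
  have hmem : x + ε ∈ {y | Set.Ico x y ⊆ V} := by
    intro y hy
    exact hball ⟨lt_of_lt_of_le (by linarith) hy.1, hy.2⟩
  calc x < x + ε := by linarith
  _ ≤ cR V x := le_csSup (R_bddAbove hVab hx) hmem

lemma le_cL (hVab : V ⊆ Set.Ioo a b) (hx : x ∈ V) : a ≤ cL V x :=
  le_csInf L_nonempty fun y hy => by
    by_contra h
    push_neg at h
    exact lt_irrefl a (hVab (hy ⟨h, (hVab hx).1.le⟩)).1

lemma cR_le (hVab : V ⊆ Set.Ioo a b) (hx : x ∈ V) : cR V x ≤ b :=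
  csSup_le R_nonempty fun y hy => by
    by_contra h
    push_neg at h
    exact lt_irrefl b (hVab (hy ⟨(hVab hx).2.le, h⟩)).2

lemma Ioc_cL_subset (hz : z ∈ Set.Ioc (cL V x) x) : z ∈ V := by
  obtain ⟨y, hy, hyz⟩ := exists_lt_of_csInf_lt L_nonempty hz.1
  exact hy ⟨hyz, hz.2⟩

lemma Ico_cR_subset (hz : z ∈ Set.Ico x (cR V x)) : z ∈ V := by
  obtain ⟨y, hy, hyz⟩ := exists_lt_of_lt_csSup R_nonempty hz.2
  exact hy ⟨hz.1, hyz⟩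

lemma Ioo_comp_subset (hz : z ∈ Set.Ioo (cL V x) (cR V x)) : z ∈ V := by
  rcases le_or_gt z x with h | h
  · exact Ioc_cL_subset ⟨hz.1, h⟩
  · exact Ico_cR_subset ⟨h.le, hz.2⟩

lemma cL_not_mem (hV : IsOpen V) (hVab : V ⊆ Set.Ioo a b) (hx : x ∈ V) :
    cL V x ∉ V := by
  intro hmem
  obtain ⟨ε, hε, hball⟩ := Metric.isOpen_iff.mp hV _ hmem
  rw [Real.ball_eq_Ioo] at hball
  have hLx : cL V x < x := cL_lt hV hVab hx
  have hmem2 : cL V x - ε / 2 ∈ {y | Set.Ioc y x ⊆ V} := by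
    intro w hw
    rcases le_or_gt w (cL V x) with h | h
    · exact hball ⟨by linarith [hw.1], by linarith⟩
    · exact Ioc_cL_subset ⟨h, hw.2⟩
  have := csInf_le (L_bddBelow hVab hx) hmem2
  have : cL V x ≤ cL V x - ε / 2 := this
  linarith

lemma cR_not_mem (hV : IsOpen V) (hVab : V ⊆ Set.Ioo a b) (hx : x ∈ V) :
    cR V x ∉ V := by
  intro hmem
  obtain ⟨ε, hε, hball⟩ := Metric.isOpen_iff.mp hV _ hmem
  rw [Real.ball_eq_Ioo] at hball
  have hxR : x < cR V x := lt_cR hV hVab hx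
  have hmem2 : cR V x + ε / 2 ∈ {y | Set.Ico x y ⊆ V} := by
    intro w hw
    rcases lt_or_ge w (cR V x) with h | h
    · exact Ico_cR_subset ⟨hw.1, h⟩
    · exact hball ⟨by linarith, by linarith [hw.2]⟩
  have h3 : cR V x + ε / 2 ≤ cR V x := le_csSup (R_bddAbove hVab hx) hmem2
  linarith

lemma comp_mono (hV : IsOpen V) (hVab : V ⊆ Set.Ioo a b) (hx : x ∈ V) (hzV : z ∈ V)
    (hz : z ∈ Set.Ioo (cL V x) (cR V x)) : cL V z ≤ cL V x ∧ cR V x ≤ cR V z := by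
  obtain ⟨hz1, hz2⟩ := hz
  constructor
  · by_contra h
    push_neg at h
    obtain ⟨y, hy1, hy2⟩ := exists_between (lt_min h hz1)
    have hyL : Set.Ioc y z ⊆ V := fun w hw =>
      Ioo_comp_subset ⟨lt_trans hy1 hw.1, lt_of_le_of_lt hw.2 hz2⟩
    have h4 : cL V z ≤ y := csInf_le (L_bddBelow hVab hzV) hyL
    have h5 : y < cL V z := lt_of_lt_of_le hy2 (min_le_left _ _)
    linarith
  · by_contra h
    push_neg at h
    obtain ⟨y, hy1, hy2⟩ := exists_between (max_lt h hz2)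
    have hyR : Set.Ico z y ⊆ V := fun w hw =>
      Ioo_comp_subset ⟨lt_of_lt_of_le hz1 hw.1, lt_trans hw.2 hy2⟩
    have h4 : y ≤ cR V z := le_csSup (R_bddAbove hVab hzV) hyR
    have h5 : cR V z < y := lt_of_le_of_lt (le_max_left _ _) hy1
    linarith

end comp

lemma comp_eq {V : Set ℝ} {a b x z : ℝ} (hV : IsOpen V) (hVab : V ⊆ Set.Ioo a b)
    (hx : x ∈ V) (hzV : z ∈ V) (hz : z ∈ Set.Ioo (cL V x) (cR V x)) :
    cL V z = cL V x ∧ cR V z = cR V x := by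
  obtain ⟨h1, h2⟩ := comp_mono hV hVab hx hzV hz
  have hxz : x ∈ Set.Ioo (cL V z) (cR V z) :=
    ⟨lt_of_le_of_lt h1 (cL_lt hV hVab hx), lt_of_lt_of_le (lt_cR hV hVab hx) h2⟩
  obtain ⟨h3, h4⟩ := comp_mono hV hVab hzV hx hxz
  exact ⟨le_antisymm h1 h3, le_antisymm h4 h2⟩

/-- Integral over an open set vanishes if the integral over every maximal
subinterval with endpoints outside the set vanishes. -/
lemma key {a b : ℝ} (f : ℝ → ℝ) {V : Set ℝ} (hV : IsOpen V) (hVab : V ⊆ Set.Ioo a b)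
    (hint : IntegrableOn f V volume)
    (h0 : ∀ c d : ℝ, a ≤ c → c < d → d ≤ b → Set.Ioo c d ⊆ V → c ∉ V → d ∉ V →
      ∫ s in Set.Ioo c d, f s = 0) :
    ∫ s in V, f s = 0 := by
  classical
  obtain ⟨e, hesurj⟩ : ∃ e : ℕ → ℚ, Function.Surjective e :=
    ⟨(Denumerable.eqv ℚ).symm, (Denumerable.eqv ℚ).symm.surjective⟩
  obtain ⟨C, hC⟩ : ∃ C : ℕ → Set ℝ, C = fun n =>
      if ((e n : ℝ)) ∈ V then Set.Ioo (cL V (e n)) (cR V (e n)) else ∅ := ⟨_, rfl⟩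
  obtain ⟨s, hs⟩ : ∃ s : ℕ → Set ℝ, s = fun n => ⋃ i ∈ Finset.range n, C i := ⟨_, rfl⟩
  -- basic facts about C
  have hCsub : ∀ n, C n ⊆ V := by
    intro n w hw
    by_cases h : ((e n : ℝ)) ∈ V
    · simp only [hC, if_pos h] at hw
      exact Ioo_comp_subset hw
    · simp only [hC, if_neg h] at hw
      exact absurd hw (Set.notMem_empty w)
  have hCmeas : ∀ n, MeasurableSet (C n) := by
    intro n
    by_cases h : ((e n : ℝ)) ∈ V
    · simp only [hC, if_pos h]
      exact measurableSet_Ioo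
    · simp only [hC, if_neg h]
      exact MeasurableSet.empty
  have hCint : ∀ n, ∫ w in C n, f w = 0 := by
    intro n
    by_cases hmem : ((e n : ℝ)) ∈ V
    · simp only [hC, if_pos hmem]
      exact h0 _ _ (le_cL hVab hmem) (lt_trans (cL_lt hV hVab hmem) (lt_cR hV hVab hmem))
        (cR_le hVab hmem) (fun w hw => Ioo_comp_subset hw)
        (cL_not_mem hV hVab hmem) (cR_not_mem hV hVab hmem)
    · simp only [hC, if_neg hmem]
      simp
  -- equal or disjoint
  have hCeqd : ∀ i j, (C i ∩ C j).Nonempty → C i = C j := by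
    intro i j ⟨w, hwi, hwj⟩
    have hi : ((e i : ℝ)) ∈ V := by
      by_contra h
      simp only [hC, if_neg h] at hwi
      exact hwi
    have hj : ((e j : ℝ)) ∈ V := by
      by_contra h
      simp only [hC, if_neg h] at hwj
      exact hwj
    rw [hC] at hwi hwj ⊢
    simp only [if_pos hi, if_pos hj] at hwi hwj ⊢
    have hwV : w ∈ V := Ioo_comp_subset hwi
    obtain ⟨hi1, hi2⟩ := comp_eq hV hVab hi hwV hwi
    obtain ⟨hj1, hj2⟩ := comp_eq hV hVab hj hwV hwj
    rw [← hi1, ← hi2, ← hj1, ← hj2]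
  -- s facts
  have hsmeas : ∀ n, MeasurableSet (s n) := by
    intro n
    rw [hs]
    exact MeasurableSet.biUnion (Finset.range n).countable_toSet (fun i _ => hCmeas i)
  have hsmono : Monotone s := by
    intro m n hmn
    rw [hs]
    intro w hw
    simp only [Set.mem_iUnion] at hw ⊢
    obtain ⟨i, hi, hwi⟩ := hw
    exact ⟨i, Finset.mem_range.mpr (lt_of_lt_of_le (Finset.mem_range.mp hi) hmn), hwi⟩
  have hssub : ∀ n, s n ⊆ V := by
    intro n
    rw [hs]
    exact Set.iUnion₂_subset fun i _ => hCsub i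
  have hsucc : ∀ n, s (n + 1) = s n ∪ C n := by
    intro n
    rw [hs]
    simp only [Finset.range_add_one, Finset.set_biUnion_insert]
    exact Set.union_comm _ _
  -- integral over s n is 0
  have hsint : ∀ n, ∫ w in s n, f w = 0 := by
    intro n
    induction n with
    | zero =>
      rw [hs]
      simp
    | succ n ih =>
      rw [hsucc n]
      by_cases hd : (C n ∩ s n).Nonempty
      · -- C n equals one of the earlier components, so union is s n
        obtain ⟨w, hw1, hw2⟩ := hd
        rw [hs] at hw2
        simp only [Set.mem_iUnion] at hw2
        obtain ⟨i, hi', hwi⟩ := hw2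
        have hCni : C n = C i := hCeqd n i ⟨w, hw1, hwi⟩
        have hsub : C n ⊆ s n := by
          rw [hCni, hs]
          intro w' hw'
          simp only [Set.mem_iUnion]
          exact ⟨i, hi', hw'⟩
        rw [Set.union_eq_self_of_subset_right hsub]
        exact ih
      · rw [Set.not_nonempty_iff_eq_empty] at hd
        have hdisj : Disjoint (s n) (C n) := by
          rw [Set.disjoint_iff_inter_eq_empty, Set.inter_comm]
          exact hd
        rw [MeasureTheory.setIntegral_union hdisj (hCmeas n)
          (hint.mono_set (hssub n)) (hint.mono_set (hCsub n)), ih, hCint n, add_zero]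
  -- union of s n is V
  have hsU : (⋃ n, s n) = V := by
    apply Set.Subset.antisymm
    · exact Set.iUnion_subset hssub
    · intro x hx
      have hxmem : x ∈ Set.Ioo (cL V x) (cR V x) := ⟨cL_lt hV hVab hx, lt_cR hV hVab hx⟩
      obtain ⟨q, hq1, hq2⟩ := exists_rat_btwn hxmem.1
      have hqIoo : (q : ℝ) ∈ Set.Ioo (cL V x) (cR V x) := ⟨hq1, lt_trans hq2 hxmem.2⟩
      have hqV : (q : ℝ) ∈ V := Ioo_comp_subset hqIoo
      obtain ⟨h1, h2⟩ := comp_eq hV hVab hx hqV hqIoo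
      obtain ⟨n, hn⟩ := hesurj q
      have hxC : x ∈ C n := by
        simp only [hC, hn, if_pos hqV, h1, h2]
        exact hxmem
      refine Set.mem_iUnion.mpr ⟨n + 1, ?_⟩
      rw [hs]
      simp only [Set.mem_iUnion]
      exact ⟨n, Finset.mem_range.mpr (Nat.lt_succ_self _), hxC⟩
  have htend := MeasureTheory.tendsto_setIntegral_of_monotone hsmeas hsmono
    (by rw [hsU]; exact hint)
  rw [hsU] at htend
  have : Filter.Tendsto (fun _ : ℕ => (0 : ℝ)) Filter.atTop (nhds (∫ w in V, f w)) := by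
    convert htend using 1
    funext n
    rw [hsint n]
  exact (tendsto_nhds_unique tendsto_const_nhds this).symm

lemma ftc {T : ℝ} (f : ℝ → ℝ) (hf : IntervalIntegrable f volume 0 T)
    (H : ℝ → ℝ) (hH : ∀ t : ℝ, H t = ∫ s in (0 : ℝ)..t, f s)
    {c d : ℝ} (hc : 0 ≤ c) (hcd : c ≤ d) (hd : d ≤ T) :
    ∫ s in Set.Ioo c d, f s = H d - H c := by
  have hTpos : (0:ℝ) ≤ T := le_trans (le_trans hc hcd) hd
  have h1 : IntervalIntegrable f volume 0 c := by
    apply hf.mono_set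
    rw [Set.uIcc_of_le hc, Set.uIcc_of_le hTpos]
    exact Set.Icc_subset_Icc le_rfl (le_trans hcd hd)
  have h2 : IntervalIntegrable f volume 0 d := by
    apply hf.mono_set
    rw [Set.uIcc_of_le (le_trans hc hcd), Set.uIcc_of_le hTpos]
    exact Set.Icc_subset_Icc le_rfl hd
  rw [hH c, hH d, intervalIntegral.integral_interval_sub_left h2 h1,
    intervalIntegral.integral_of_le hcd, ← MeasureTheory.integral_Ioc_eq_integral_Ioo]

lemma zero_case {T : ℝ} (hT : 0 < T) (f : ℝ → ℝ)
    (hf : IntervalIntegrable f volume 0 T)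
    (H : ℝ → ℝ) (hH : ∀ t : ℝ, H t = ∫ s in (0 : ℝ)..t, f s)
    (hcont : ContinuousOn H (Set.Icc 0 T)) :
    ∀ t ∈ Set.Icc (0 : ℝ) T, H t ≤ 0 →
      ∫ s in Set.Ioo 0 t ∩ {u : ℝ | 0 < H u}, f s = 0 := by
  intro t ⟨ht0, htT⟩ hHt
  set V : Set ℝ := Set.Ioo 0 t ∩ {u : ℝ | 0 < H u} with hVdef
  have hVsub : V ⊆ Set.Ioo 0 t := Set.inter_subset_left
  have hV : IsOpen V := by
    rw [isOpen_iff_mem_nhds]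
    intro x ⟨hx1, hx2⟩
    have hxI : Set.Icc (0:ℝ) T ∈ nhds x :=
      Icc_mem_nhds hx1.1 (lt_of_lt_of_le hx1.2 htT)
    have hca : ContinuousAt H x := hcont.continuousAt hxI
    have h1 : Set.Ioo (0:ℝ) t ∈ nhds x := Ioo_mem_nhds hx1.1 hx1.2
    have h2 : {u : ℝ | 0 < H u} ∈ nhds x := by
      have := hca.preimage_mem_nhds (Ioi_mem_nhds (Set.mem_setOf_eq ▸ hx2))
      exact this
    exact Filter.inter_mem h1 h2
  have hfI : IntegrableOn f (Set.Ioc 0 T) volume :=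
    (intervalIntegrable_iff_integrableOn_Ioc_of_le hT.le).mp hf
  have hint : IntegrableOn f V volume :=
    hfI.mono_set (fun x hx => ⟨(hVsub hx).1, le_trans (hVsub hx).2.le htT⟩)
  apply key f hV hVsub hint
  intro c d hc0 hcd hdt hIoo hcV hdV
  -- boundary values vanish
  have hcT : c ∈ Set.Icc (0:ℝ) T := ⟨hc0, le_trans (le_trans hcd.le hdt) htT⟩
  have hdT : d ∈ Set.Icc (0:ℝ) T := ⟨le_trans hc0 hcd.le, le_trans hdt htT⟩
  have hIooIcc : Set.Ioo c d ⊆ Set.Icc 0 T :=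
    fun w hw => ⟨le_trans hc0 hw.1.le, le_trans hw.2.le (le_trans hdt htT)⟩
  have hne : (nhdsWithin c (Set.Ioo c d)).NeBot := by
    rw [← mem_closure_iff_nhdsWithin_neBot, closure_Ioo (ne_of_lt hcd)]
    exact ⟨le_rfl, hcd.le⟩
  have hne' : (nhdsWithin d (Set.Ioo c d)).NeBot := by
    rw [← mem_closure_iff_nhdsWithin_neBot, closure_Ioo (ne_of_lt hcd)]
    exact ⟨hcd.le, le_rfl⟩
  have hpos : ∀ w ∈ Set.Ioo c d, 0 ≤ H w := fun w hw => ((hIoo hw).2 : 0 < H w).le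
  have hHcnn : 0 ≤ H c := by
    have htendc : Filter.Tendsto H (nhdsWithin c (Set.Ioo c d)) (nhds (H c)) :=
      (hcont.continuousWithinAt hcT).mono hIooIcc
    exact ge_of_tendsto htendc
      (Filter.eventually_of_mem self_mem_nhdsWithin hpos)
  have hHdnn : 0 ≤ H d := by
    have htendd : Filter.Tendsto H (nhdsWithin d (Set.Ioo c d)) (nhds (H d)) :=
      (hcont.continuousWithinAt hdT).mono hIooIcc
    exact ge_of_tendsto htendd
      (Filter.eventually_of_mem self_mem_nhdsWithin hpos)
  have hH0 : H 0 = 0 := by rw [hH 0, intervalIntegral.integral_same]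
  have hHc : H c = 0 := by
    rcases eq_or_lt_of_le hc0 with h | h
    · rw [← h, hH0]
    · have hcIoo : c ∈ Set.Ioo 0 t := ⟨h, lt_of_lt_of_le hcd hdt⟩
      have : ¬ (0 < H c) := fun hcon => hcV ⟨hcIoo, hcon⟩
      linarith
  have hHd : H d = 0 := by
    rcases eq_or_lt_of_le hdt with h | h
    · have hd0 : H d ≤ 0 := by rw [h]; exact hHt
      linarith
    · have hdIoo : d ∈ Set.Ioo 0 t := ⟨lt_of_le_of_lt hc0 hcd, h⟩
      have : ¬ (0 < H d) := fun hcon => hdV ⟨hdIoo, hcon⟩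
      linarith
  rw [ftc f hf H hH hc0 hcd.le (le_trans hdt htT), hHc, hHd, sub_zero]

/-- Let `f` be Lebesgue integrable on `[0, T]` and `H t = ∫₀ᵗ f s ds`. Then
for every `t ∈ [0, T]`, the positive part of `H` satisfies
`max (H t) 0 = ∫ s in (0:ℝ)..t, 1_{H > 0} (s) f s ds`. -/
theorem stmt11 (T : ℝ) (hT : 0 < T) (f : ℝ → ℝ)
    (hf : IntervalIntegrable f volume 0 T)
    (H : ℝ → ℝ) (hH : ∀ t : ℝ, H t = ∫ s in (0 : ℝ)..t, f s) :
    ∀ t ∈ Set.Icc (0 : ℝ) T,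
      max (H t) 0 = ∫ s in (0 : ℝ)..t, Set.indicator {u : ℝ | 0 < H u} f s := by
  have hfI : IntegrableOn f (Set.Ioc 0 T) volume :=
    (intervalIntegrable_iff_integrableOn_Ioc_of_le hT.le).mp hf
  have hfIcc : IntegrableOn f (Set.uIcc 0 T) volume := by
    rw [Set.uIcc_of_le hT.le, integrableOn_Icc_iff_integrableOn_Ioc]
    exact hfI
  have hcont : ContinuousOn H (Set.Icc 0 T) := by
    have h := intervalIntegral.continuousOn_primitive_interval (a := 0) (b := T)
      (μ := volume) hfIcc
    rw [Set.uIcc_of_le hT.le] at h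
    exact h.congr (fun x _ => hH x)
  set A' : Set ℝ := Set.Icc 0 T ∩ H ⁻¹' (Set.Ioi 0) with hA'
  have hclosed : IsClosed (Set.Icc 0 T ∩ H ⁻¹' (Set.Iic 0)) :=
    hcont.preimage_isClosed_of_isClosed isClosed_Icc isClosed_Iic
  have hA'meas : MeasurableSet A' := by
    have hdiff : A' = Set.Icc 0 T \ (Set.Icc 0 T ∩ H ⁻¹' (Set.Iic 0)) := by
      ext u
      simp only [hA', Set.mem_inter_iff, Set.mem_preimage, Set.mem_Ioi, Set.mem_Iic,
        Set.mem_diff, not_and, not_le]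
      tauto
    rw [hdiff]
    exact measurableSet_Icc.diff hclosed.measurableSet
  -- interval integrability of the indicator
  have hII : ∀ c d : ℝ, 0 ≤ c → c ≤ d → d ≤ T →
      IntervalIntegrable (A'.indicator f) volume c d := by
    intro c d h1 h2 h3
    rw [intervalIntegrable_iff_integrableOn_Ioc_of_le h2]
    exact (hfI.mono_set (Set.Ioc_subset_Ioc h1 h3)).indicator hA'meas
  -- the zero lemma in interval-integral form
  have hzero : ∀ c : ℝ, c ∈ Set.Icc (0:ℝ) T → H c ≤ 0 →
      (∫ s in (0:ℝ)..c, A'.indicator f s) = 0 := by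
    intro c hc hHc
    rw [intervalIntegral.integral_of_le hc.1, MeasureTheory.setIntegral_indicator hA'meas]
    have hseteq : Set.Ioc 0 c ∩ A' = Set.Ioc 0 c ∩ {u : ℝ | 0 < H u} := by
      ext u
      simp only [hA', Set.mem_inter_iff, Set.mem_preimage, Set.mem_Ioi, Set.mem_Icc,
        Set.mem_Ioc, Set.mem_setOf_eq]
      constructor
      · rintro ⟨h1, _, h3⟩
        exact ⟨h1, h3⟩
      · rintro ⟨h1, h2⟩
        exact ⟨h1, ⟨h1.1.le, le_trans h1.2 hc.2⟩, h2⟩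
    rw [hseteq, MeasureTheory.setIntegral_congr_set
      (show (Set.Ioc 0 c ∩ {u : ℝ | 0 < H u} : Set ℝ) =ᵐ[volume] (Set.Ioo 0 c ∩ {u : ℝ | 0 < H u} : Set ℝ) from
      (MeasureTheory.ae_eq_set_inter MeasureTheory.Ioo_ae_eq_Ioc.symm
        (Filter.EventuallyEq.refl _ _)))]
    exact zero_case hT f hf H hH hcont c hc hHc
  intro t ht
  obtain ⟨ht0, htT⟩ := ht
  -- replace the global indicator by the measurable one
  have hind : Set.EqOn (Set.indicator {u : ℝ | 0 < H u} f) (A'.indicator f)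
      (Set.uIcc 0 t) := by
    intro s hs
    rw [Set.uIcc_of_le ht0] at hs
    have hsT : s ∈ Set.Icc (0:ℝ) T := ⟨hs.1, le_trans hs.2 htT⟩
    by_cases h : 0 < H s
    · rw [Set.indicator_of_mem (show s ∈ {u : ℝ | 0 < H u} from h),
        Set.indicator_of_mem (s := A') (a := s) ⟨hsT, h⟩]
    · rw [Set.indicator_of_notMem (show s ∉ {u : ℝ | 0 < H u} from h),
        Set.indicator_of_notMem (s := A') (a := s) (fun hc => h hc.2)]
  rw [intervalIntegral.integral_congr hind]
  by_cases hpos : 0 < H t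
  · set S : Set ℝ := Set.Icc 0 t ∩ H ⁻¹' (Set.Iic 0) with hS
    have hScl : IsClosed S :=
      (hcont.mono (Set.Icc_subset_Icc le_rfl htT)).preimage_isClosed_of_isClosed
        isClosed_Icc isClosed_Iic
    have hH0 : H 0 = 0 := by rw [hH 0, intervalIntegral.integral_same]
    have hSne : S.Nonempty := ⟨0, ⟨le_rfl, ht0⟩, by simp [hH0]⟩
    have hSbdd : BddAbove S := BddAbove.mono Set.inter_subset_left bddAbove_Icc
    set c := sSup S with hc
    have hcS : c ∈ S := hScl.csSup_mem hSne hSbdd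
    obtain ⟨⟨hc0, hct⟩, hHc⟩ := hcS
    have hHc' : H c ≤ 0 := hHc
    have hclt : c < t := by
      rcases eq_or_lt_of_le hct with h | h
      · exfalso
        rw [h] at hHc'
        linarith
      · exact h
    have hgt : ∀ w, c < w → w ≤ t → 0 < H w := by
      intro w h1 h2
      by_contra h
      push_neg at h
      have hw : w ∈ S := ⟨⟨le_trans hc0 h1.le, h2⟩, h⟩
      exact absurd (le_csSup hSbdd hw) (not_le.mpr h1)
    have hcT : c ∈ Set.Icc (0:ℝ) T := ⟨hc0, le_trans hct htT⟩
    have hHc0 : H c = 0 := by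
      have hne : (nhdsWithin c (Set.Ioo c t)).NeBot := by
        rw [← mem_closure_iff_nhdsWithin_neBot, closure_Ioo (ne_of_lt hclt)]
        exact ⟨le_rfl, hclt.le⟩
      have hsub : Set.Ioo c t ⊆ Set.Icc 0 T :=
        fun w hw => ⟨le_trans hc0 hw.1.le, le_trans hw.2.le htT⟩
      have htendc : Filter.Tendsto H (nhdsWithin c (Set.Ioo c t)) (nhds (H c)) :=
        (hcont.continuousWithinAt hcT).mono hsub
      have : 0 ≤ H c := ge_of_tendsto htendc
        (Filter.eventually_of_mem self_mem_nhdsWithin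
          (fun w hw => (hgt w hw.1 hw.2.le).le))
      linarith
    have e1 := intervalIntegral.integral_add_adjacent_intervals
      (hII 0 c le_rfl hc0 (le_trans hct htT)) (hII c t hc0 hclt.le htT)
    have e2 : ∫ s in c..t, A'.indicator f s = H t := by
      rw [intervalIntegral.integral_of_le hclt.le,
        MeasureTheory.setIntegral_congr_set MeasureTheory.Ioo_ae_eq_Ioc.symm,
        MeasureTheory.setIntegral_congr_fun measurableSet_Ioo
          (fun w hw => Set.indicator_of_mem (s := A') (a := w)
            ⟨⟨le_trans hc0 hw.1.le, le_trans hw.2.le htT⟩, hgt w hw.1 hw.2.le⟩ f),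
        ftc f hf H hH hc0 hclt.le htT, hHc0, sub_zero]
    have e3 : ∫ s in (0:ℝ)..c, A'.indicator f s = 0 := hzero c hcT hHc'
    rw [← e1, e2, e3, zero_add, max_eq_left hpos.le]
  · push_neg at hpos
    rw [hzero t ⟨ht0, htT⟩ hpos, max_eq_right hpos]
end
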